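/- arXiv:2202.13710 — 7 statements merged into one kernel-verified Lean document; each statement's English description precedes it below -/
import Mathlib

section
/- Let X ⊆ ℝⁿ be a nonempty set endowed with the Lebesgue σ-algebra that contains a void action x₀, let ρ ∈ (0,1], and let f : X → [0,1] and c : X → [0,1]^m be measurable with f(x₀) = 0 and c(x₀)[i] = 0 for every i. Then sup over strategy mixtures ξ ∈ Ξ of inf over λ ∈ ℝ^m with λ ≥ 0 of L(ξ,λ,f,c) equals inf over λ ≥ 0 of sup over ξ ∈ Ξ of L(ξ,λ,f,c), and both equal OPT_LP(f,c) (strong duality holds even though f, c and X may be non-convex). -/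
open MeasureTheory

noncomputable section

/-- The Lagrangian `L(ξ, λ, f, c) = E_{x∼ξ}[f x] + ⟨λ, ρ𝟙 − E_{x∼ξ}[c x]⟩`. -/
def lagrangian {n m : ℕ} {X : Set (Fin n → ℝ)} (ρ : ℝ)
    (ξ : Measure X) (lam : Fin m → ℝ) (f : X → ℝ) (c : X → Fin m → ℝ) : ℝ :=
  (∫ x, f x ∂ξ) + ∑ j, lam j * (ρ - ∫ x, c x j ∂ξ)

/-- `OPT_LP(f,c)`: the optimal value of the LP over strategy mixtures. -/
def optLP {n m : ℕ} (X : Set (Fin n → ℝ)) (ρ : ℝ)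
    (f : X → ℝ) (c : X → Fin m → ℝ) : ℝ :=
  sSup {v : ℝ | ∃ ξ : Measure X, IsProbabilityMeasure ξ ∧
    (∀ j, (∫ x, c x j ∂ξ) ≤ ρ) ∧ v = ∫ x, f x ∂ξ}

lemma aux_integrable {α : Type*} [MeasurableSpace α] {μ : Measure α} [IsFiniteMeasure μ]
    {g : α → ℝ} (hg : Measurable g) (hb : ∀ x, g x ∈ Set.Icc (0:ℝ) 1) :
    Integrable g μ :=
  (integrable_const (1:ℝ)).mono' hg.aestronglyMeasurable
    (ae_of_all _ fun x => by
      rw [Real.norm_eq_abs, abs_le]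
      exact ⟨by linarith [(hb x).1], (hb x).2⟩)

lemma aux_clm_decomp {m : ℕ} (φ : ((Fin m → ℝ) × ℝ) →L[ℝ] ℝ) (u : Fin m → ℝ) (r : ℝ) :
    φ (u, r) = (∑ j, u j * φ (Pi.single j 1, 0)) + r * φ (0, 1) := by
  have h1 : ((u, r) : (Fin m → ℝ) × ℝ)
      = (∑ j, u j • ((Pi.single j 1 : Fin m → ℝ), (0:ℝ))) + r • ((0 : Fin m → ℝ), (1:ℝ)) := by
    ext i
    · simp [Prod.fst_sum, Finset.sum_apply, Pi.single_apply]
    · simp [Prod.snd_sum]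
  rw [h1, map_add, map_sum, φ.map_smul, smul_eq_mul]
  simp only [φ.map_smul, smul_eq_mul]

variable {n m : ℕ} {X : Set (Fin n → ℝ)} {ρ : ℝ} {f : X → ℝ} {c : X → Fin m → ℝ}

lemma lag_integral (hfm : Measurable f) (hcm : ∀ j, Measurable fun x => c x j)
    (hf01 : ∀ x, f x ∈ Set.Icc (0 : ℝ) 1) (hc01 : ∀ x j, c x j ∈ Set.Icc (0 : ℝ) 1)
    (ξ : Measure X) [IsProbabilityMeasure ξ] (lam : Fin m → ℝ) :
    lagrangian ρ ξ lam f c = ∫ x, (f x + ∑ j, lam j * (ρ - c x j)) ∂ξ := by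
  have hfi : Integrable f ξ := aux_integrable hfm hf01
  have hci : ∀ j, Integrable (fun x => c x j) ξ := fun j => aux_integrable (hcm j) (fun x => hc01 x j)
  have hterm : ∀ j, Integrable (fun x => lam j * (ρ - c x j)) ξ :=
    fun j => (((integrable_const ρ).sub (hci j)).const_mul _)
  rw [integral_add hfi (integrable_finset_sum _ fun j _ => hterm j),
    integral_finset_sum _ fun j _ => hterm j]
  unfold lagrangian
  congr 1
  refine Finset.sum_congr rfl fun j _ => ?_
  rw [integral_const_mul, integral_sub (integrable_const ρ) (hci j), integral_const]
  simp

lemma lag_dirac (hfm : Measurable f) (hcm : ∀ j, Measurable fun x => c x j)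
    (x : X) (lam : Fin m → ℝ) :
    lagrangian ρ (Measure.dirac x) lam f c = f x + ∑ j, lam j * (ρ - c x j) := by
  unfold lagrangian
  rw [integral_dirac' _ _ hfm.stronglyMeasurable]
  congr 1
  refine Finset.sum_congr rfl fun j _ => ?_
  rw [integral_dirac' _ _ (hcm j).stronglyMeasurable]

lemma key_sep (x₀ : X) (hρ0 : 0 < ρ) (hρ1 : ρ ≤ 1)
    (hfm : Measurable f) (hcm : ∀ j, Measurable fun x => c x j)
    (hf01 : ∀ x, f x ∈ Set.Icc (0 : ℝ) 1) (hc01 : ∀ x j, c x j ∈ Set.Icc (0 : ℝ) 1)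
    (hf0 : f x₀ = 0) (hc0 : ∀ j, c x₀ j = 0)
    {V : ℝ} (hV0 : 0 ≤ V)
    (hVub : ∀ (ξ : Measure X), IsProbabilityMeasure ξ → (∀ j, (∫ x, c x j ∂ξ) ≤ ρ) →
      (∫ x, f x ∂ξ) ≤ V)
    {ε : ℝ} (hε : 0 < ε) :
    ∃ lam : Fin m → ℝ, (∀ j, 0 ≤ lam j) ∧
      ∀ x : X, f x + ∑ j, lam j * (ρ - c x j) ≤ V + ε := by
  classical
  -- the set of "achievable-or-dominated" payoff profiles
  set S : Set ((Fin m → ℝ) × ℝ) :=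
    {p | ∃ x : X, (∀ j, c x j ≤ p.1 j) ∧ p.2 ≤ f x} with hS
  set T : Set ((Fin m → ℝ) × ℝ) :=
    {p | ∃ ξ : Measure X, IsProbabilityMeasure ξ ∧ (∀ j, (∫ x, c x j ∂ξ) ≤ p.1 j) ∧
      p.2 ≤ ∫ x, f x ∂ξ} with hT
  have hST : S ⊆ T := by
    rintro p ⟨x, hc, hfx⟩
    refine ⟨Measure.dirac x, inferInstance, fun j => ?_, ?_⟩
    · rw [integral_dirac' _ _ (hcm j).stronglyMeasurable]; exact hc j
    · rw [integral_dirac' _ _ hfm.stronglyMeasurable]; exact hfx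
  have hTconv : Convex ℝ T := by
    rintro p hp q hq a b ha hb hab
    obtain ⟨ξ₁, h₁, hc₁, hf₁⟩ := hp
    obtain ⟨ξ₂, h₂, hc₂, hf₂⟩ := hq
    haveI := h₁; haveI := h₂
    have hmix : ∀ g : X → ℝ, Measurable g → (∀ x, g x ∈ Set.Icc (0:ℝ) 1) →
        ∫ x, g x ∂(ENNReal.ofReal a • ξ₁ + ENNReal.ofReal b • ξ₂)
          = a * ∫ x, g x ∂ξ₁ + b * ∫ x, g x ∂ξ₂ := by
      intro g hg hgb
      rw [integral_add_measure ((aux_integrable hg hgb).smul_measure ENNReal.ofReal_ne_top)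
          ((aux_integrable hg hgb).smul_measure ENNReal.ofReal_ne_top),
        integral_smul_measure, integral_smul_measure,
        ENNReal.toReal_ofReal ha, ENNReal.toReal_ofReal hb, smul_eq_mul, smul_eq_mul]
    refine ⟨ENNReal.ofReal a • ξ₁ + ENNReal.ofReal b • ξ₂, ⟨?_⟩, fun j => ?_, ?_⟩
    · simp [Measure.add_apply, Measure.smul_apply, smul_eq_mul, measure_univ,
        ← ENNReal.ofReal_add ha hb, hab]
    · rw [hmix _ (hcm j) (fun x => hc01 x j)]
      have h1 : a * (∫ x, c x j ∂ξ₁) ≤ a * p.1 j := by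
        exact mul_le_mul_of_nonneg_left (hc₁ j) ha
      have h2 : b * (∫ x, c x j ∂ξ₂) ≤ b * q.1 j := by
        exact mul_le_mul_of_nonneg_left (hc₂ j) hb
      have : (a • p + b • q).1 j = a * p.1 j + b * q.1 j := by simp [Prod.smul_fst]
      rw [this]; linarith
    · rw [hmix _ hfm hf01]
      have h1 : a * p.2 ≤ a * (∫ x, f x ∂ξ₁) := mul_le_mul_of_nonneg_left hf₁ ha
      have h2 : b * q.2 ≤ b * (∫ x, f x ∂ξ₂) := mul_le_mul_of_nonneg_left hf₂ hb
      have : (a • p + b • q).2 = a * p.2 + b * q.2 := by simp [Prod.smul_snd]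
      rw [this]; linarith
  have hsub : convexHull ℝ S ⊆ T := convexHull_min hST hTconv
  have h00T : ((0 : Fin m → ℝ), (0:ℝ)) ∈ S := ⟨x₀, fun j => by simp [hc0], by simp [hf0]⟩
  set p₀ : (Fin m → ℝ) × ℝ := ((fun _ => ρ), V + ε) with hp₀def
  set δ : ℝ := ρ * ε / (2 * (V + ρ + 1)) with hδdef
  have hden : (0:ℝ) < 2 * (V + ρ + 1) := by nlinarith
  have hδ0 : 0 < δ := div_pos (mul_pos hρ0 hε) hden
  have hδkey : δ * (ρ + V) < ρ * ε := by
    rw [hδdef, div_mul_eq_mul_div, div_lt_iff₀ hden]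
    nlinarith [mul_pos hρ0 hε]
  have hp₀ : p₀ ∉ closure (convexHull ℝ S) := by
    intro hmem
    obtain ⟨q, hq, hdist⟩ := Metric.mem_closure_iff.mp hmem δ hδ0
    have hq1 : ∀ j, q.1 j < ρ + δ := by
      intro j
      have h1 : dist (p₀.1 j) (q.1 j) ≤ dist p₀.1 q.1 := dist_le_pi_dist _ _ j
      have h2 : dist p₀.1 q.1 ≤ dist p₀ q := by rw [Prod.dist_eq]; exact le_max_left _ _
      have h3 := lt_of_le_of_lt (h1.trans h2) hdist
      rw [Real.dist_eq, abs_lt] at h3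
      have : p₀.1 j = ρ := rfl
      rw [this] at h3
      linarith [h3.1]
    have hq2 : V + ε - δ < q.2 := by
      have h1 : dist p₀.2 q.2 ≤ dist p₀ q := by rw [Prod.dist_eq]; exact le_max_right _ _
      have h3 := lt_of_le_of_lt h1 hdist
      rw [Real.dist_eq, abs_lt] at h3
      have : p₀.2 = V + ε := rfl
      rw [this] at h3
      linarith [h3.1]
    -- mix q with the void point (0,0) inside T
    have hθ1 : (0:ℝ) ≤ ρ / (ρ + δ) := by positivity
    have hθ2 : (0:ℝ) ≤ δ / (ρ + δ) := by positivity
    have hθsum : ρ / (ρ + δ) + δ / (ρ + δ) = 1 := by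
      field_simp
    have hmix := hTconv (hsub hq) (hST h00T) hθ1 hθ2 hθsum
    obtain ⟨ξ, hξ, hcξ, hfξ⟩ := hmix
    haveI := hξ
    have hfeas : ∀ j, (∫ x, c x j ∂ξ) ≤ ρ := by
      intro j
      have h1 : ((ρ / (ρ + δ)) • q + (δ / (ρ + δ)) • ((0 : Fin m → ℝ), (0:ℝ))).1 j
          = (ρ / (ρ + δ)) * q.1 j := by simp
      have h2 := hcξ j
      rw [h1] at h2
      have h3 : (ρ / (ρ + δ)) * q.1 j ≤ (ρ / (ρ + δ)) * (ρ + δ) :=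
        mul_le_mul_of_nonneg_left (hq1 j).le hθ1
      have h4 : (ρ / (ρ + δ)) * (ρ + δ) = ρ := by field_simp
      linarith
    have hle := hVub ξ hξ hfeas
    have h1 : ((ρ / (ρ + δ)) • q + (δ / (ρ + δ)) • ((0 : Fin m → ℝ), (0:ℝ))).2
        = (ρ / (ρ + δ)) * q.2 := by simp
    rw [h1] at hfξ
    have hθpos : (0:ℝ) < ρ / (ρ + δ) := by positivity
    have h5 : (ρ / (ρ + δ)) * (V + ε - δ) < (ρ / (ρ + δ)) * q.2 :=
      mul_lt_mul_of_pos_left hq2 hθpos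
    have h6 : (ρ / (ρ + δ)) * (V + ε - δ) ≤ V := by linarith
    rw [div_mul_eq_mul_div, div_le_iff₀ (by linarith : (0:ℝ) < ρ + δ)] at h6
    nlinarith
  obtain ⟨φ, s, hφ, hsp⟩ := geometric_hahn_banach_closed_point
    ((convex_convexHull ℝ S).closure) isClosed_closure hp₀
  set a : Fin m → ℝ := fun j => φ (Pi.single j 1, 0) with hadef
  set bb : ℝ := φ (0, 1) with hbbdef
  have hmemS : ∀ p ∈ S, φ p < s := fun p hp =>
    hφ p (subset_closure (subset_convexHull ℝ S hp))
  have hs0 : 0 < s := by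
    have h := hmemS _ h00T
    have h0 : ((0 : Fin m → ℝ), (0:ℝ)) = (0 : (Fin m → ℝ) × ℝ) := rfl
    rw [h0, map_zero] at h
    exact h
  have hbb0 : 0 ≤ bb := by
    by_contra h
    push_neg at h
    set t : ℝ := (s + 1) / (-bb) with htdef
    have ht0 : 0 ≤ t := div_nonneg (by linarith) (by linarith)
    have hmem : ((0 : Fin m → ℝ), -t) ∈ S := ⟨x₀, fun j => by simp [hc0], by rw [hf0]; simpa using ht0⟩
    have hlt := hmemS _ hmem
    rw [aux_clm_decomp] at hlt
    simp only [Pi.zero_apply, zero_mul, Finset.sum_const_zero, zero_add] at hlt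
    have heq : t * (-bb) = s + 1 := by
      rw [htdef]; exact div_mul_cancel₀ _ (by linarith : -bb ≠ 0)
    rw [← hbbdef] at hlt
    nlinarith
  have ha : ∀ j, a j ≤ 0 := by
    intro j
    by_contra h
    push_neg at h
    set t : ℝ := (s + 1) / a j with htdef
    have ht0 : 0 ≤ t := div_nonneg (by linarith) h.le
    have hmem : ((Pi.single j t : Fin m → ℝ), (0:ℝ)) ∈ S :=
      ⟨x₀, fun k => by
        rw [hc0]
        by_cases hk : k = j
        · subst hk; simp [ht0]
        · simp [Pi.single_apply, hk], by rw [hf0]⟩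
    have hlt := hmemS _ hmem
    rw [aux_clm_decomp] at hlt
    simp only [zero_mul, add_zero] at hlt
    have hsum : ∑ k, (Pi.single j t : Fin m → ℝ) k * φ (Pi.single k 1, 0) = t * a j := by
      rw [Finset.sum_eq_single j (fun k _ hk => by simp [Pi.single_apply, hk])
        (fun hj => absurd (Finset.mem_univ j) hj)]
      simp [hadef]
    rw [hsum] at hlt
    have heq : t * a j = s + 1 := by
      rw [htdef]; exact div_mul_cancel₀ _ (ne_of_gt h)
    nlinarith
  have hφp₀ : φ p₀ = (∑ j, ρ * a j) + (V + ε) * bb := by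
    rw [hp₀def, aux_clm_decomp]
  have hbbpos : 0 < bb := by
    rcases lt_or_eq_of_le hbb0 with h | h
    · exact h
    · exfalso
      have hsum : (∑ j, ρ * a j) ≤ 0 :=
        Finset.sum_nonpos fun j _ => mul_nonpos_of_nonneg_of_nonpos hρ0.le (ha j)
      rw [hφp₀, ← h] at hsp
      linarith
  refine ⟨fun j => -(a j) / bb, fun j => div_nonneg (neg_nonneg.2 (ha j)) hbbpos.le,
    fun x => ?_⟩
  show f x + ∑ j, (-(a j) / bb) * (ρ - c x j) ≤ V + ε
  have hx := hmemS _ (⟨x, fun j => le_refl _, le_refl _⟩ : ((c x, f x) : (Fin m → ℝ) × ℝ) ∈ S)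
  rw [aux_clm_decomp] at hx
  have hlt : (∑ j, c x j * a j) + f x * bb < (∑ j, ρ * a j) + (V + ε) * bb := by
    rw [hφp₀] at hsp
    exact hx.trans hsp
  have hexp : (f x + ∑ j, (-(a j) / bb) * (ρ - c x j)) * bb
      = f x * bb + ∑ j, (-(a j)) * (ρ - c x j) := by
    rw [add_mul, Finset.sum_mul]
    congr 1
    refine Finset.sum_congr rfl fun j _ => ?_
    field_simp
  have hexp2 : ∑ j, (-(a j)) * (ρ - c x j) = (∑ j, c x j * a j) - ∑ j, ρ * a j := by
    rw [← Finset.sum_sub_distrib]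
    exact Finset.sum_congr rfl fun j _ => by ring
  have hfin : (f x + ∑ j, (-(a j) / bb) * (ρ - c x j)) * bb ≤ (V + ε) * bb := by
    rw [hexp, hexp2]; linarith
  exact le_of_mul_le_mul_right hfin hbbpos


/-- **Strong duality over strategy mixtures** (Theorem 1): even for non-convex `f`, `c`, `X`,
`sup_ξ inf_{λ ≥ 0} L(ξ,λ,f,c) = inf_{λ ≥ 0} sup_ξ L(ξ,λ,f,c) = OPT_LP(f,c)`. -/
theorem strong_duality_strategy_mixtures
    {n m : ℕ} (X : Set (Fin n → ℝ)) (x₀ : X) (ρ : ℝ) (hρ : ρ ∈ Set.Ioc (0 : ℝ) 1)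
    (f : X → ℝ) (c : X → Fin m → ℝ)
    (hfm : Measurable f) (hcm : ∀ j, Measurable fun x => c x j)
    (hf01 : ∀ x, f x ∈ Set.Icc (0 : ℝ) 1)
    (hc01 : ∀ x j, c x j ∈ Set.Icc (0 : ℝ) 1)
    (hf0 : f x₀ = 0) (hc0 : ∀ j, c x₀ j = 0) :
    sSup {v : ℝ | ∃ ξ : Measure X, IsProbabilityMeasure ξ ∧
        v = sInf {w : ℝ | ∃ lam : Fin m → ℝ, (∀ j, 0 ≤ lam j) ∧
          w = lagrangian ρ ξ lam f c}} =
      sInf {w : ℝ | ∃ lam : Fin m → ℝ, (∀ j, 0 ≤ lam j) ∧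
        w = sSup {v : ℝ | ∃ ξ : Measure X, IsProbabilityMeasure ξ ∧
          v = lagrangian ρ ξ lam f c}} ∧
    sInf {w : ℝ | ∃ lam : Fin m → ℝ, (∀ j, 0 ≤ lam j) ∧
        w = sSup {v : ℝ | ∃ ξ : Measure X, IsProbabilityMeasure ξ ∧
          v = lagrangian ρ ξ lam f c}} = optLP X ρ f c := by
  classical
  obtain ⟨hρ0, hρ1⟩ := hρ
  set P : Set ℝ := {v : ℝ | ∃ ξ : Measure X, IsProbabilityMeasure ξ ∧
    (∀ j, (∫ x, c x j ∂ξ) ≤ ρ) ∧ v = ∫ x, f x ∂ξ} with hPdef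
  have hoptP : optLP X ρ f c = sSup P := rfl
  have hdiracf : ∫ x, f x ∂(Measure.dirac x₀) = 0 := by
    rw [integral_dirac' _ _ hfm.stronglyMeasurable, hf0]
  have hdfeas : ∀ j, (∫ x, c x j ∂(Measure.dirac x₀)) ≤ ρ := fun j => by
    rw [integral_dirac' _ _ (hcm j).stronglyMeasurable, hc0 j]; exact hρ0.le
  have h0P : (0:ℝ) ∈ P := ⟨Measure.dirac x₀, inferInstance, hdfeas, hdiracf.symm⟩
  have hPub : ∀ v ∈ P, v ≤ 1 := by
    rintro v ⟨ξ, hξ, -, rfl⟩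
    haveI := hξ
    calc ∫ x, f x ∂ξ ≤ ∫ _x, (1:ℝ) ∂ξ :=
          integral_mono (aux_integrable hfm hf01) (integrable_const 1) (fun x => (hf01 x).2)
      _ = 1 := by simp
  have hPbdd : BddAbove P := ⟨1, hPub⟩
  set V : ℝ := sSup P with hVdef
  have hV0 : 0 ≤ V := le_csSup hPbdd h0P
  have hVmem : ∀ v ∈ P, v ≤ V := fun v hv => le_csSup hPbdd hv
  have hVub : ∀ (ξ : Measure X), IsProbabilityMeasure ξ → (∀ j, (∫ x, c x j ∂ξ) ≤ ρ) →
      (∫ x, f x ∂ξ) ≤ V := fun ξ hξ hfeas => hVmem _ ⟨ξ, hξ, hfeas, rfl⟩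
  have hIc : ∀ (ξ : Measure X) (j : Fin m), 0 ≤ ∫ x, c x j ∂ξ :=
    fun ξ j => integral_nonneg fun x => (hc01 x j).1
  -- the inner infimum over λ
  have hinner : ∀ (ξ : Measure X), IsProbabilityMeasure ξ →
      sInf {w : ℝ | ∃ lam : Fin m → ℝ, (∀ j, 0 ≤ lam j) ∧ w = lagrangian ρ ξ lam f c}
        = if (∀ j, (∫ x, c x j ∂ξ) ≤ ρ) then ∫ x, f x ∂ξ else 0 := by
    intro ξ hξ
    haveI := hξ
    by_cases hfeas : ∀ j, (∫ x, c x j ∂ξ) ≤ ρ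
    · rw [if_pos hfeas]
      apply IsLeast.csInf_eq
      constructor
      · exact ⟨0, fun j => le_refl 0, by simp [lagrangian]⟩
      · rintro w ⟨lam, hlam, rfl⟩
        unfold lagrangian
        have h1 : 0 ≤ ∑ j, lam j * (ρ - ∫ x, c x j ∂ξ) :=
          Finset.sum_nonneg fun j _ => mul_nonneg (hlam j) (by linarith [hfeas j])
        linarith
    · rw [if_neg hfeas]
      apply Real.sInf_of_not_bddBelow
      rintro ⟨b, hb⟩
      push_neg at hfeas
      obtain ⟨j₀, hj₀⟩ := hfeas
      have hd0 : ρ - (∫ x, c x j₀ ∂ξ) < 0 := by linarith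
      have hbf : b ≤ ∫ x, f x ∂ξ := hb ⟨0, fun j => le_refl 0, by simp [lagrangian]⟩
      set t : ℝ := (b - (∫ x, f x ∂ξ) - 1) / (ρ - ∫ x, c x j₀ ∂ξ) with htd
      have ht0 : 0 ≤ t := by
        rw [htd, div_nonneg_iff]
        right
        exact ⟨by linarith, hd0.le⟩
      set lam : Fin m → ℝ := fun j => if j = j₀ then t else 0 with hlamdef
      have hval : lagrangian ρ ξ lam f c
          = (∫ x, f x ∂ξ) + t * (ρ - ∫ x, c x j₀ ∂ξ) := by
        unfold lagrangian
        congr 1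
        rw [Finset.sum_eq_single j₀ (fun k _ hk => by simp [hlamdef, hk])
          (fun hj => absurd (Finset.mem_univ _) hj)]
        simp [hlamdef]
      have hmem : lagrangian ρ ξ lam f c ∈
          {w : ℝ | ∃ lam : Fin m → ℝ, (∀ j, 0 ≤ lam j) ∧ w = lagrangian ρ ξ lam f c} :=
        ⟨lam, fun j => by by_cases h : j = j₀ <;> simp [hlamdef, h, ht0], rfl⟩
      have hble := hb hmem
      have htd' : t * (ρ - ∫ x, c x j₀ ∂ξ) = b - (∫ x, f x ∂ξ) - 1 := by
        rw [htd]; exact div_mul_cancel₀ _ (ne_of_lt hd0)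
      rw [hval, htd'] at hble
      linarith
  -- LHS = V
  have hAub : ∀ v ∈ {v : ℝ | ∃ ξ : Measure X, IsProbabilityMeasure ξ ∧
      v = sInf {w : ℝ | ∃ lam : Fin m → ℝ, (∀ j, 0 ≤ lam j) ∧
        w = lagrangian ρ ξ lam f c}}, v ≤ V := by
    rintro v ⟨ξ, hξ, rfl⟩
    rw [hinner ξ hξ]
    split_ifs with h
    · exact hVmem _ ⟨ξ, hξ, h, rfl⟩
    · exact hV0
  have hLHS : sSup {v : ℝ | ∃ ξ : Measure X, IsProbabilityMeasure ξ ∧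
      v = sInf {w : ℝ | ∃ lam : Fin m → ℝ, (∀ j, 0 ≤ lam j) ∧
        w = lagrangian ρ ξ lam f c}} = V := by
    apply le_antisymm
    · apply csSup_le
      · exact ⟨0, Measure.dirac x₀, inferInstance, by
          rw [hinner _ inferInstance, if_pos hdfeas, hdiracf]⟩
      · exact hAub
    · rw [hVdef]
      apply csSup_le_csSup ⟨V, hAub⟩ ⟨0, h0P⟩
      rintro v ⟨ξ, hξ, hfeas, rfl⟩
      exact ⟨ξ, hξ, by rw [hinner ξ hξ, if_pos hfeas]⟩
  -- RHS = V
  have hBub : ∀ w ∈ {w : ℝ | ∃ lam : Fin m → ℝ, (∀ j, 0 ≤ lam j) ∧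
      w = sSup {v : ℝ | ∃ ξ : Measure X, IsProbabilityMeasure ξ ∧
        v = lagrangian ρ ξ lam f c}}, V ≤ w := by
    rintro w ⟨lam, hlam, rfl⟩
    have hMub : ∀ v ∈ {v : ℝ | ∃ ξ : Measure X, IsProbabilityMeasure ξ ∧
        v = lagrangian ρ ξ lam f c}, v ≤ 1 + ∑ j, lam j * ρ := by
      rintro v ⟨ξ, hξ, rfl⟩
      haveI := hξ
      unfold lagrangian
      have h1 : (∫ x, f x ∂ξ) ≤ 1 :=
        calc ∫ x, f x ∂ξ ≤ ∫ _x, (1:ℝ) ∂ξ :=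
              integral_mono (aux_integrable hfm hf01) (integrable_const 1) (fun x => (hf01 x).2)
          _ = 1 := by simp
      have h2 : ∑ j, lam j * (ρ - ∫ x, c x j ∂ξ) ≤ ∑ j, lam j * ρ :=
        Finset.sum_le_sum fun j _ =>
          mul_le_mul_of_nonneg_left (by linarith [hIc ξ j]) (hlam j)
      linarith
    rw [hVdef]
    apply csSup_le ⟨0, h0P⟩
    rintro v ⟨ξ, hξ, hfeas, rfl⟩
    haveI := hξ
    have hmem : lagrangian ρ ξ lam f c ∈ {v : ℝ | ∃ ξ : Measure X, IsProbabilityMeasure ξ ∧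
        v = lagrangian ρ ξ lam f c} := ⟨ξ, hξ, rfl⟩
    have hL : (∫ x, f x ∂ξ) ≤ lagrangian ρ ξ lam f c := by
      unfold lagrangian
      have h1 : 0 ≤ ∑ j, lam j * (ρ - ∫ x, c x j ∂ξ) :=
        Finset.sum_nonneg fun j _ => mul_nonneg (hlam j) (by linarith [hfeas j])
      linarith
    exact hL.trans (le_csSup ⟨1 + ∑ j, lam j * ρ, hMub⟩ hmem)
  have hBne : (sSup {v : ℝ | ∃ ξ : Measure X, IsProbabilityMeasure ξ ∧
      v = lagrangian ρ ξ (0 : Fin m → ℝ) f c}) ∈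
      {w : ℝ | ∃ lam : Fin m → ℝ, (∀ j, 0 ≤ lam j) ∧
        w = sSup {v : ℝ | ∃ ξ : Measure X, IsProbabilityMeasure ξ ∧
          v = lagrangian ρ ξ lam f c}} := ⟨0, fun j => le_refl 0, rfl⟩
  have hRHS : sInf {w : ℝ | ∃ lam : Fin m → ℝ, (∀ j, 0 ≤ lam j) ∧
      w = sSup {v : ℝ | ∃ ξ : Measure X, IsProbabilityMeasure ξ ∧
        v = lagrangian ρ ξ lam f c}} = V := by
    apply le_antisymm
    · apply le_of_forall_pos_le_add
      intro ε hε
      obtain ⟨lam, hlam, hbd⟩ :=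
        key_sep x₀ hρ0 hρ1 hfm hcm hf01 hc01 hf0 hc0 hV0 hVub hε
      have hwmem : sSup {v : ℝ | ∃ ξ : Measure X, IsProbabilityMeasure ξ ∧
          v = lagrangian ρ ξ lam f c} ∈
          {w : ℝ | ∃ lam : Fin m → ℝ, (∀ j, 0 ≤ lam j) ∧
            w = sSup {v : ℝ | ∃ ξ : Measure X, IsProbabilityMeasure ξ ∧
              v = lagrangian ρ ξ lam f c}} := ⟨lam, hlam, rfl⟩
      have hwle : sSup {v : ℝ | ∃ ξ : Measure X, IsProbabilityMeasure ξ ∧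
          v = lagrangian ρ ξ lam f c} ≤ V + ε := by
        refine csSup_le ⟨lagrangian ρ (Measure.dirac x₀) lam f c,
          ⟨Measure.dirac x₀, inferInstance, rfl⟩⟩ ?_
        rintro v ⟨ξ, hξ, rfl⟩
        haveI := hξ
        rw [lag_integral hfm hcm hf01 hc01 ξ lam]
        calc ∫ x, (f x + ∑ j, lam j * (ρ - c x j)) ∂ξ ≤ ∫ _x, (V + ε) ∂ξ :=
              integral_mono
                ((aux_integrable hfm hf01).add (integrable_finset_sum _ fun j _ =>
                  (((integrable_const ρ).sub
                    (aux_integrable (hcm j) fun x => hc01 x j)).const_mul _)))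
                (integrable_const _) (fun x => hbd x)
          _ = V + ε := by simp
      exact (csInf_le ⟨V, hBub⟩ hwmem).trans hwle
    · exact le_csInf ⟨_, hBne⟩ hBub
  exact ⟨by rw [hLHS, hRHS], by rw [hRHS, hoptP, hVdef]⟩
end
end

section
/- Let X ⊆ ℝⁿ be a nonempty set endowed with the Lebesgue σ-algebra that contains a void action x₀, let ρ ∈ (0,1], and let f : X → [0,1] and c : X → [0,1]^m be measurable with f(x₀) = 0 and c(x₀)[i] = 0 for every i. Let D = {λ ∈ ℝ^m : λ ≥ 0 and ‖λ‖₁ ≤ 1/ρ}. Then sup over ξ ∈ Ξ of inf over λ ∈ D of L(ξ,λ,f,c) equals inf over λ ∈ D of sup over ξ ∈ Ξ of L(ξ,λ,f,c), and both equal OPT_LP(f,c); i.e., strong duality is preserved when the dual variables are restricted to the compact set D. -/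
open MeasureTheory

noncomputable section

/-- The truncated dual set `D = {λ ∈ ℝ^m : λ ≥ 0, ‖λ‖₁ ≤ 1/ρ}`. -/
def dualSet (m : ℕ) (ρ : ℝ) : Set (Fin m → ℝ) :=
  {lam | (∀ j, 0 ≤ lam j) ∧ (∑ j, lam j) ≤ 1 / ρ}

section helpers
variable {n m : ℕ} {X : Set (Fin n → ℝ)}

lemma integrable_of_bdd {g : X → ℝ} (hg : Measurable g) {K : ℝ}
    (hb : ∀ x, |g x| ≤ K) (ξ : Measure X) [IsFiniteMeasure ξ] : Integrable g ξ :=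
  ⟨hg.aestronglyMeasurable, HasFiniteIntegral.of_bounded (C := K) (ae_of_all _ hb)⟩

lemma integrable_of_01 {g : X → ℝ} (hg : Measurable g) (h01 : ∀ x, g x ∈ Set.Icc (0:ℝ) 1)
    (ξ : Measure X) [IsFiniteMeasure ξ] : Integrable g ξ :=
  integrable_of_bdd hg (K := 1) (fun x => abs_le.2 ⟨by linarith [(h01 x).1], (h01 x).2⟩) ξ

lemma integral_bounds {g : X → ℝ} (hg : Measurable g) (h01 : ∀ x, g x ∈ Set.Icc (0:ℝ) 1)
    (ξ : Measure X) [IsProbabilityMeasure ξ] : (∫ x, g x ∂ξ) ∈ Set.Icc (0:ℝ) 1 := by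
  constructor
  · exact integral_nonneg fun x => (h01 x).1
  · calc ∫ x, g x ∂ξ ≤ ∫ _x, (1:ℝ) ∂ξ :=
          integral_mono (integrable_of_01 hg h01 ξ) (integrable_const 1) (fun x => (h01 x).2)
    _ = 1 := by simp

lemma smul_dirac_finite (r : ℝ) (y : X) :
    IsFiniteMeasure (ENNReal.ofReal r • Measure.dirac y) := by
  constructor
  rw [Measure.smul_apply]
  exact ENNReal.mul_lt_top ENNReal.ofReal_lt_top (by simp)

lemma mixture_prob {ι : Type} [DecidableEq ι] (t : Finset ι) (w : ι → ℝ)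
    (hw : ∀ i ∈ t, 0 ≤ w i) (hw1 : ∑ i ∈ t, w i = 1) (xx : ι → X) (x₀ : X)
    (θ : ℝ) (hθ0 : 0 ≤ θ) (hθ1 : θ ≤ 1) :
    IsProbabilityMeasure
      (ENNReal.ofReal θ • Measure.dirac x₀ +
        ∑ i ∈ t, ENNReal.ofReal ((1-θ) * w i) • Measure.dirac (xx i)) := by
  constructor
  rw [Measure.add_apply, Measure.smul_apply, Measure.finset_sum_apply]
  simp only [Measure.smul_apply, Measure.dirac_apply' _ MeasurableSet.univ]
  simp only [Set.mem_univ, Set.indicator_of_mem, Pi.one_apply, smul_eq_mul, mul_one]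
  rw [← ENNReal.ofReal_sum_of_nonneg (fun i hi => by nlinarith [hw i hi]),
    ← ENNReal.ofReal_add hθ0 (by
      refine Finset.sum_nonneg fun i hi => ?_
      nlinarith [hw i hi])]
  rw [← Finset.mul_sum, hw1]
  norm_num

lemma mixture_integral {ι : Type} [DecidableEq ι] (t : Finset ι) (w : ι → ℝ)
    (hw : ∀ i ∈ t, 0 ≤ w i) (xx : ι → X) (x₀ : X)
    (θ : ℝ) (hθ0 : 0 ≤ θ) (hθ1 : θ ≤ 1)
    {g : X → ℝ} (hg : Measurable g) (hb : ∀ x, |g x| ≤ 1) :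
    ∫ x, g x ∂(ENNReal.ofReal θ • Measure.dirac x₀ +
        ∑ i ∈ t, ENNReal.ofReal ((1-θ) * w i) • Measure.dirac (xx i)) =
      θ * g x₀ + ∑ i ∈ t, (1-θ) * w i * g (xx i) := by
  have hint : ∀ (r : ℝ) (y : X), Integrable g (ENNReal.ofReal r • Measure.dirac y) := by
    intro r y
    have := smul_dirac_finite (X := X) r y
    exact integrable_of_bdd hg hb _
  rw [integral_add_measure (hint θ x₀)
    (integrable_finset_sum_measure.2 fun i _ => hint _ _),
    integral_finset_sum_measure (fun i _ => hint _ _)]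
  simp only [integral_smul_measure, integral_dirac, smul_eq_mul]
  rw [ENNReal.toReal_ofReal hθ0]
  congr 1
  refine Finset.sum_congr rfl fun i hi => ?_
  rw [ENNReal.toReal_ofReal (by nlinarith [hw i hi])]

lemma phi_eval {m : ℕ} (φ : ((Fin m → ℝ) × ℝ) →L[ℝ] ℝ) (y : Fin m → ℝ) (t : ℝ) :
    φ (y, t) = (∑ j, y j * φ (Pi.single j 1, 0)) + t * φ (0, 1) := by
  have hdec : (y, t) = (∑ j, (y j) • ((Pi.single j 1 : Fin m → ℝ), (0:ℝ))) + t • (0, 1) := by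
    refine Prod.ext ?_ ?_ <;>
      simp [Prod.fst_sum, Prod.snd_sum, ← Pi.single_smul, Finset.univ_sum_single]
  rw [hdec, map_add, map_sum]
  simp only [φ.map_smul, smul_eq_mul]

variable (ρ : ℝ) (lam : Fin m → ℝ) (f : X → ℝ) (c : X → Fin m → ℝ)

lemma lagrangian_eq
    (hfm : Measurable f) (hcm : ∀ j, Measurable fun x => c x j)
    (hf01 : ∀ x, f x ∈ Set.Icc (0:ℝ) 1) (hc01 : ∀ x j, c x j ∈ Set.Icc (0:ℝ) 1)
    (ξ : Measure X) [IsProbabilityMeasure ξ] :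
    lagrangian ρ ξ lam f c = ∫ x, (f x + ∑ j, lam j * (ρ - c x j)) ∂ξ := by
  have hfi : Integrable f ξ := integrable_of_01 hfm hf01 ξ
  have hci : ∀ j, Integrable (fun x => c x j) ξ := fun j => integrable_of_01 (hcm j) (fun x => hc01 x j) ξ
  have hterm : ∀ j, Integrable (fun x => lam j * (ρ - c x j)) ξ :=
    fun j => (((integrable_const ρ).sub (hci j)).const_mul _)
  rw [integral_add hfi (integrable_finset_sum _ (fun j _ => hterm j)),
    integral_finset_sum _ (fun j _ => hterm j)]
  unfold lagrangian
  congr 1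
  refine Finset.sum_congr rfl fun j _ => ?_
  rw [show (fun a => lam j * (ρ - c a j)) = fun a => lam j * (ρ - c a j) from rfl,
    integral_const_mul, integral_sub (integrable_const ρ) (hci j), integral_const]
  simp

lemma lagrangian_bounds (hρ0 : 0 < ρ)
    (hfm : Measurable f) (hcm : ∀ j, Measurable fun x => c x j)
    (hf01 : ∀ x, f x ∈ Set.Icc (0:ℝ) 1) (hc01 : ∀ x j, c x j ∈ Set.Icc (0:ℝ) 1)
    (hlam : lam ∈ dualSet m ρ)
    (ξ : Measure X) [IsProbabilityMeasure ξ] :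
    -(1/ρ) ≤ lagrangian ρ ξ lam f c ∧ lagrangian ρ ξ lam f c ≤ 2 := by
  obtain ⟨hlam0, hlams⟩ := hlam
  have hIf := integral_bounds hfm hf01 ξ
  have hIc : ∀ j, (∫ x, c x j ∂ξ) ∈ Set.Icc (0:ℝ) 1 := fun j => integral_bounds (hcm j) (fun x => hc01 x j) ξ
  constructor
  · have h1 : ∀ j ∈ Finset.univ, -lam j ≤ lam j * (ρ - ∫ x, c x j ∂ξ) := by
      intro j _
      have : (-1 : ℝ) ≤ ρ - ∫ x, c x j ∂ξ := by have := (hIc j).2; linarith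
      calc -lam j = lam j * (-1) := by ring
        _ ≤ lam j * (ρ - ∫ x, c x j ∂ξ) := mul_le_mul_of_nonneg_left this (hlam0 j)
    have := Finset.sum_le_sum h1
    rw [Finset.sum_neg_distrib] at this
    unfold lagrangian
    have h2 : -(1/ρ) ≤ -∑ j, lam j := by linarith
    linarith [hIf.1]
  · have h1 : ∀ j ∈ Finset.univ, lam j * (ρ - ∫ x, c x j ∂ξ) ≤ lam j * ρ := by
      intro j _
      exact mul_le_mul_of_nonneg_left (by linarith [(hIc j).1]) (hlam0 j)
    have := Finset.sum_le_sum h1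
    rw [← Finset.sum_mul] at this
    have h2 : (∑ j, lam j) * ρ ≤ 1 := by
      calc (∑ j, lam j) * ρ ≤ (1/ρ) * ρ := mul_le_mul_of_nonneg_right hlams hρ0.le
        _ = 1 := by field_simp
    unfold lagrangian
    nlinarith [hIf.2]

lemma lagrangian_le_of_pointwise {K : ℝ}
    (hfm : Measurable f) (hcm : ∀ j, Measurable fun x => c x j)
    (hf01 : ∀ x, f x ∈ Set.Icc (0:ℝ) 1) (hc01 : ∀ x j, c x j ∈ Set.Icc (0:ℝ) 1)
    (hpt : ∀ x, f x + ∑ j, lam j * (ρ - c x j) ≤ K)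
    (ξ : Measure X) [IsProbabilityMeasure ξ] :
    lagrangian ρ ξ lam f c ≤ K := by
  rw [lagrangian_eq ρ lam f c hfm hcm hf01 hc01 ξ]
  have hgi : Integrable (fun x => f x + ∑ j, lam j * (ρ - c x j)) ξ := by
    refine (integrable_of_01 hfm hf01 ξ).add (integrable_finset_sum _ (fun j _ => ?_))
    exact ((integrable_const ρ).sub (integrable_of_01 (hcm j) (fun x => hc01 x j) ξ)).const_mul _
  calc ∫ x, (f x + ∑ j, lam j * (ρ - c x j)) ∂ξ ≤ ∫ _x, K ∂ξ :=
        integral_mono hgi (integrable_const K) hpt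
    _ = K := by simp

end helpers


set_option maxHeartbeats 1600000 in
lemma exists_dual {n m : ℕ} (X : Set (Fin n → ℝ)) (x₀ : X) (ρ : ℝ)
    (hρ : ρ ∈ Set.Ioc (0:ℝ) 1)
    (f : X → ℝ) (c : X → Fin m → ℝ)
    (hfm : Measurable f) (hcm : ∀ j, Measurable fun x => c x j)
    (hf01 : ∀ x, f x ∈ Set.Icc (0:ℝ) 1) (hc01 : ∀ x j, c x j ∈ Set.Icc (0:ℝ) 1)
    (hf0 : f x₀ = 0) (hc0 : ∀ j, c x₀ j = 0)
    {ε : ℝ} (hε : 0 < ε) :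
    ∃ lam ∈ dualSet m ρ,
      ∀ x, f x + ∑ j, lam j * (ρ - c x j) ≤ optLP X ρ f c + 2*ε := by
  classical
  obtain ⟨hρ0, hρ1⟩ := hρ
  set C := optLP X ρ f c with hCdef
  set F : Set ℝ := {v : ℝ | ∃ ξ : Measure X, IsProbabilityMeasure ξ ∧
    (∀ j, (∫ x, c x j ∂ξ) ≤ ρ) ∧ v = ∫ x, f x ∂ξ} with hFdef
  have hCF : C = sSup F := rfl
  have hFb : ∀ v ∈ F, v ≤ 1 := by
    rintro v ⟨ξ, hξ, _, rfl⟩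
    exact (integral_bounds hfm hf01 ξ).2
  have hFbdd : BddAbove F := ⟨1, hFb⟩
  have h0F : (0:ℝ) ∈ F := by
    refine ⟨Measure.dirac x₀, inferInstance, fun j => ?_, ?_⟩
    · rw [integral_dirac, hc0 j]; exact hρ0.le
    · rw [integral_dirac, hf0]
  have hC1 : C ≤ 1 := Real.sSup_le hFb zero_le_one
  have hC0 : 0 ≤ C := le_csSup hFbdd h0F
  set T : Set ((Fin m → ℝ) × ℝ) :=
    {p | ∃ x : X, (∀ j, c x j ≤ p.1 j) ∧ p.2 ≤ f x} with hTdef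
  set p₀ : (Fin m → ℝ) × ℝ := (fun _ => ρ, C + ε) with hp₀def
  -- the separating point is not in the closed convex hull
  have hp₀ : p₀ ∉ closure (convexHull ℝ T) := by
    intro hmem
    set δ : ℝ := ε * ρ / (2 * (ρ + 1 + ε)) with hδdef
    have hδ0 : 0 < δ := by positivity
    obtain ⟨q, hqT, hqd⟩ := Metric.mem_closure_iff.mp hmem δ hδ0
    rw [convexHull_eq] at hqT
    obtain ⟨ι, t, w, z, hw0, hw1, hzT, hq⟩ := hqT
    rw [Finset.centerMass_eq_of_sum_1 _ _ hw1] at hq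
    have hz : ∀ i, i ∈ t → ∃ x : X, (∀ j, c x j ≤ (z i).1 j) ∧ (z i).2 ≤ f x :=
      fun i hi => hzT i hi
    set xx : ι → X := fun i => if h : i ∈ t then (hz i h).choose else x₀ with hxxdef
    have hxx1 : ∀ i ∈ t, ∀ j, c (xx i) j ≤ (z i).1 j := by
      intro i hi j; simp only [hxxdef, dif_pos hi]; exact (hz i hi).choose_spec.1 j
    have hxx2 : ∀ i ∈ t, (z i).2 ≤ f (xx i) := by
      intro i hi; simp only [hxxdef, dif_pos hi]; exact (hz i hi).choose_spec.2
    set θ : ℝ := δ / (ρ + δ) with hθdef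
    have hρδ : 0 < ρ + δ := by linarith
    have hθ0 : 0 ≤ θ := by positivity
    have hθ1 : θ ≤ 1 := by rw [hθdef, div_le_one hρδ]; linarith
    have hθρ : θ * (ρ + δ) = δ := by rw [hθdef]; field_simp
    set μ := ENNReal.ofReal θ • Measure.dirac x₀ +
        ∑ i ∈ t, ENNReal.ofReal ((1-θ) * w i) • Measure.dirac (xx i) with hμdef
    haveI : IsProbabilityMeasure μ := mixture_prob t w hw0 hw1 xx x₀ θ hθ0 hθ1
    have hintf : ∫ x, f x ∂μ = θ * f x₀ + ∑ i ∈ t, (1-θ) * w i * f (xx i) :=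
      mixture_integral t w hw0 xx x₀ θ hθ0 hθ1 hfm
        (fun x => abs_le.2 ⟨by linarith [(hf01 x).1], (hf01 x).2⟩)
    have hintc : ∀ j, ∫ x, c x j ∂μ = θ * c x₀ j + ∑ i ∈ t, (1-θ) * w i * c (xx i) j :=
      fun j => mixture_integral t w hw0 xx x₀ θ hθ0 hθ1 (hcm j)
        (fun x => abs_le.2 ⟨by linarith [(hc01 x j).1], (hc01 x j).2⟩)
    have hq1 : ∀ j, q.1 j = ∑ i ∈ t, w i * (z i).1 j := by
      intro j
      rw [← hq, Prod.fst_sum, Finset.sum_apply]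
      exact Finset.sum_congr rfl fun i _ => rfl
    have hq2 : q.2 = ∑ i ∈ t, w i * (z i).2 := by
      rw [← hq, Prod.snd_sum]
      exact Finset.sum_congr rfl fun i _ => rfl
    have hdq1 : dist p₀.1 q.1 < δ :=
      lt_of_le_of_lt (by rw [Prod.dist_eq]; exact le_max_left _ _) hqd
    have hdq2 : dist p₀.2 q.2 < δ :=
      lt_of_le_of_lt (by rw [Prod.dist_eq]; exact le_max_right _ _) hqd
    have hdist1 : ∀ j, q.1 j ≤ ρ + δ := by
      intro j
      have h := lt_of_le_of_lt (dist_le_pi_dist p₀.1 q.1 j) hdq1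
      rw [Real.dist_eq] at h
      have h2 := abs_lt.mp h
      have : p₀.1 j = ρ := rfl
      rw [this] at h2
      linarith [h2.1]
    have hdist2 : C + ε - δ ≤ q.2 := by
      rw [Real.dist_eq] at hdq2
      have h2 := abs_lt.mp hdq2
      have : p₀.2 = C + ε := rfl
      rw [this] at h2
      linarith [h2.2]
    have hfeas : ∀ j, (∫ x, c x j ∂μ) ≤ ρ := by
      intro j
      rw [hintc j, hc0 j, mul_zero, zero_add]
      have h1 : ∑ i ∈ t, (1-θ) * w i * c (xx i) j ≤ ∑ i ∈ t, (1-θ) * (w i * (z i).1 j) := by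
        refine Finset.sum_le_sum fun i hi => ?_
        have h := hxx1 i hi j
        have hwi := hw0 i hi
        have h19 : 0 ≤ (1-θ) * w i := mul_nonneg (by linarith) hwi
        calc (1-θ) * w i * c (xx i) j ≤ (1-θ) * w i * (z i).1 j :=
              mul_le_mul_of_nonneg_left h h19
          _ = (1-θ) * (w i * (z i).1 j) := by ring
      rw [← Finset.mul_sum, ← hq1 j] at h1
      have h2 : (1-θ) * q.1 j ≤ (1-θ) * (ρ + δ) :=
        mul_le_mul_of_nonneg_left (hdist1 j) (by linarith)
      have h3 : (1-θ) * (ρ + δ) = ρ := by nlinarith [hθρ]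
      linarith
    have hval : (1-θ) * (C + ε - δ) ≤ ∫ x, f x ∂μ := by
      rw [hintf, hf0, mul_zero, zero_add]
      have h1 : ∑ i ∈ t, (1-θ) * (w i * (z i).2) ≤ ∑ i ∈ t, (1-θ) * w i * f (xx i) := by
        refine Finset.sum_le_sum fun i hi => ?_
        have h := hxx2 i hi
        have hwi := hw0 i hi
        have h19 : 0 ≤ (1-θ) * w i := mul_nonneg (by linarith) hwi
        calc (1-θ) * (w i * (z i).2) = (1-θ) * w i * (z i).2 := by ring
          _ ≤ (1-θ) * w i * f (xx i) := mul_le_mul_of_nonneg_left h h19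
      rw [← Finset.mul_sum, ← hq2] at h1
      have h2 : (1-θ) * (C + ε - δ) ≤ (1-θ) * q.2 :=
        mul_le_mul_of_nonneg_left hdist2 (by linarith)
      linarith
    have hCge : ∫ x, f x ∂μ ≤ C :=
      le_csSup hFbdd (show (∫ x, f x ∂μ) ∈ F from ⟨μ, ‹IsProbabilityMeasure μ›, hfeas, rfl⟩)
    have h1 : (1-θ) * (C + ε - δ) ≤ C := le_trans hval hCge
    have hθρ2 : θ * ρ ≤ δ := by nlinarith [mul_nonneg hθ0 hδ0.le]
    have hm : θ * (C + ε - δ) ≤ θ * (1 + ε) :=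
      mul_le_mul_of_nonneg_left (by linarith) hθ0
    have h2 : ε - δ ≤ θ * (1 + ε) := by nlinarith [h1, hm]
    have hδeq : δ * (2 * (ρ + 1 + ε)) = ε * ρ := by
      rw [hδdef]; field_simp
    have h3 : θ * (1 + ε) * ρ ≤ δ * (1 + ε) := by nlinarith [hθρ2, hε]
    have h4 : ε * ρ ≤ (δ + θ * (1 + ε)) * ρ :=
      mul_le_mul_of_nonneg_right (by linarith) hρ0.le
    nlinarith [h4, h3, hδeq, mul_pos hε hρ0, hδ0]
  -- separation
  obtain ⟨φ, u, hφp, hφS⟩ := geometric_hahn_banach_point_closed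
    ((convex_convexHull ℝ T).closure) isClosed_closure hp₀
  have hTS : ∀ p ∈ T, u < φ p := fun p hp =>
    hφS p (subset_closure (subset_convexHull ℝ T hp))
  have hu0 : u < 0 := by
    have h := hTS ((0 : Fin m → ℝ), (0:ℝ)) ⟨x₀, fun j => by simp [hc0 j], by simp [hf0]⟩
    rwa [show ((0 : Fin m → ℝ), (0:ℝ)) = (0 : (Fin m → ℝ) × ℝ) from rfl, map_zero] at h
  have ha : ∀ j, 0 ≤ φ (Pi.single j 1, 0) := by
    intro j
    by_contra hneg
    push_neg at hneg
    set M : ℝ := u / φ (Pi.single j 1, 0) with hMdef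
    have hM0 : 0 ≤ M := le_of_lt (div_pos_of_neg_of_neg hu0 hneg)
    have hmem : ((Pi.single j M : Fin m → ℝ), (0:ℝ)) ∈ T := by
      refine ⟨x₀, fun j' => ?_, by simp [hf0]⟩
      rw [hc0 j']
      rcases eq_or_ne j' j with h | h
      · subst h; simp [hM0]
      · simp [Pi.single_apply, h]
    have h := hTS _ hmem
    rw [phi_eval] at h
    have hsum : (∑ j', (Pi.single j M : Fin m → ℝ) j' * φ (Pi.single j' 1, 0))
        = M * φ (Pi.single j 1, 0) := by
      rw [Finset.sum_eq_single j]
      · simp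
      · intro k _ hk; simp [Pi.single_apply, hk]
      · simp
    rw [hsum, zero_mul, add_zero, hMdef, div_mul_cancel₀ u (ne_of_lt hneg)] at h
    exact lt_irrefl u h
  have hb : φ ((0 : Fin m → ℝ), (1:ℝ)) ≤ 0 := by
    by_contra hpos
    push_neg at hpos
    set M : ℝ := -u / φ (0, 1) with hMdef
    have hM0 : 0 ≤ M := le_of_lt (div_pos (by linarith) hpos)
    have hmem : ((0 : Fin m → ℝ), -M) ∈ T := by
      exact ⟨x₀, fun j' => by simp [hc0 j'], by simp [hf0]; linarith⟩
    have h := hTS _ hmem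
    rw [phi_eval] at h
    simp only [Pi.zero_apply, zero_mul, Finset.sum_const_zero, zero_add] at h
    rw [show -(-u / φ ((0:Fin m → ℝ), (1:ℝ))) * φ ((0:Fin m → ℝ), (1:ℝ)) = u from by
      field_simp] at h
    exact lt_irrefl u h
  have hbneg : φ ((0:Fin m → ℝ), (1:ℝ)) < 0 := by
    rcases lt_or_eq_of_le hb with h | h
    · exact h
    · exfalso
      have hp₀val : φ p₀ = ∑ j, ρ * φ (Pi.single j 1, 0) + (C+ε) * φ (0,1) := phi_eval φ _ _
      have h1 : 0 ≤ ∑ j, ρ * φ (Pi.single j 1, 0) :=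
        Finset.sum_nonneg fun j _ => mul_nonneg hρ0.le (ha j)
      have h2 := hφp
      rw [hp₀val, h, mul_zero, add_zero] at h2
      linarith
  set B : ℝ := -φ ((0:Fin m → ℝ), (1:ℝ)) with hBdef
  have hB : 0 < B := by rw [hBdef]; linarith
  have hφB : φ ((0:Fin m → ℝ), (1:ℝ)) = -B := by rw [hBdef]; ring
  set lam : Fin m → ℝ := fun j => φ (Pi.single j 1, 0) / B with hlamdef
  have hlam0 : ∀ j, 0 ≤ lam j := fun j => div_nonneg (ha j) hB.le
  have haB : ∀ j, φ (Pi.single j 1, 0) = lam j * B := fun j =>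
    (div_mul_cancel₀ _ (ne_of_gt hB)).symm
  have keyx : ∀ x : X, f x + ∑ j, lam j * (ρ - c x j) < C + ε := by
    intro x
    have hxT : ((c x : Fin m → ℝ), f x) ∈ T := ⟨x, fun j => le_rfl, le_rfl⟩
    have h1 := hTS _ hxT
    have h2 := hφp
    rw [phi_eval] at h1
    have hp₀val : φ p₀ = ∑ j, ρ * φ (Pi.single j 1, 0) + (C+ε) * φ (0,1) := phi_eval φ _ _
    rw [hp₀val] at h2
    have h3 := lt_trans h2 h1
    simp only [haB, hφB] at h3
    have e1 : ∑ j, ρ * (lam j * B) = B * ∑ j, lam j * ρ := by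
      rw [Finset.mul_sum]; exact Finset.sum_congr rfl fun j _ => by ring
    have e2 : ∑ j, c x j * (lam j * B) = B * ∑ j, lam j * c x j := by
      rw [Finset.mul_sum]; exact Finset.sum_congr rfl fun j _ => by ring
    rw [e1, e2] at h3
    have e3 : ∑ j, lam j * (ρ - c x j) = (∑ j, lam j * ρ) - ∑ j, lam j * c x j := by
      rw [← Finset.sum_sub_distrib]; exact Finset.sum_congr rfl fun j _ => by ring
    rw [e3]
    have h4 : B * (f x + ((∑ j, lam j * ρ) - ∑ j, lam j * c x j)) < B * (C + ε) := by
      nlinarith [h3]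
    exact (mul_lt_mul_iff_right₀ hB).mp h4
  have hsum : ρ * (∑ j, lam j) < C + ε := by
    have h := keyx x₀
    rw [hf0, zero_add] at h
    have e : ∑ j, lam j * (ρ - c x₀ j) = ρ * ∑ j, lam j := by
      rw [Finset.mul_sum]
      exact Finset.sum_congr rfl fun j _ => by rw [hc0 j]; ring
    rw [e] at h
    exact h
  have h1ε : (0:ℝ) < 1 + ε := by linarith
  refine ⟨fun j => lam j / (1+ε), ⟨fun j => div_nonneg (hlam0 j) h1ε.le, ?_⟩, ?_⟩
  · rw [← Finset.sum_div, div_le_div_iff₀ h1ε hρ0]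
    nlinarith [hsum, hC1]
  · intro x
    have h := keyx x
    have e : ∑ j, lam j / (1+ε) * (ρ - c x j) = (∑ j, lam j * (ρ - c x j)) / (1+ε) := by
      rw [Finset.sum_div]
      exact Finset.sum_congr rfl fun j _ => by ring
    rw [e]
    have hS : ∑ j, lam j * (ρ - c x j) ≤ C + ε - f x := by linarith
    have h2 : (∑ j, lam j * (ρ - c x j)) / (1+ε) ≤ (C + ε - f x) / (1+ε) := by gcongr
    have h3 : (C + ε - f x) / (1+ε) ≤ C + 2*ε - f x := by
      rw [div_le_iff₀ h1ε]
      nlinarith [(hf01 x).1, (hf01 x).2, hC0, hε]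
    linarith

set_option maxHeartbeats 1600000 in
/-- **Strong duality with truncated duals** (Lemma 2): restricting the dual vectors to the
compact set `D = {λ ≥ 0 : ‖λ‖₁ ≤ 1/ρ}` preserves strong duality:
`sup_ξ inf_{λ ∈ D} L = inf_{λ ∈ D} sup_ξ L = OPT_LP(f,c)`. -/
theorem strong_duality_truncated_duals
    {n m : ℕ} (X : Set (Fin n → ℝ)) (x₀ : X) (ρ : ℝ) (hρ : ρ ∈ Set.Ioc (0 : ℝ) 1)
    (f : X → ℝ) (c : X → Fin m → ℝ)
    (hfm : Measurable f) (hcm : ∀ j, Measurable fun x => c x j)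
    (hf01 : ∀ x, f x ∈ Set.Icc (0 : ℝ) 1)
    (hc01 : ∀ x j, c x j ∈ Set.Icc (0 : ℝ) 1)
    (hf0 : f x₀ = 0) (hc0 : ∀ j, c x₀ j = 0) :
    sSup {v : ℝ | ∃ ξ : Measure X, IsProbabilityMeasure ξ ∧
        v = sInf {w : ℝ | ∃ lam ∈ dualSet m ρ, w = lagrangian ρ ξ lam f c}} =
      sInf {w : ℝ | ∃ lam ∈ dualSet m ρ,
        w = sSup {v : ℝ | ∃ ξ : Measure X, IsProbabilityMeasure ξ ∧
          v = lagrangian ρ ξ lam f c}} ∧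
    sInf {w : ℝ | ∃ lam ∈ dualSet m ρ,
        w = sSup {v : ℝ | ∃ ξ : Measure X, IsProbabilityMeasure ξ ∧
          v = lagrangian ρ ξ lam f c}} = optLP X ρ f c := by
  classical
  obtain ⟨hρ0, hρ1⟩ := hρ
  have hzeroD : (0 : Fin m → ℝ) ∈ dualSet m ρ := by
    refine ⟨fun j => le_rfl, ?_⟩
    simp only [Pi.zero_apply, Finset.sum_const_zero]
    positivity
  have hlag0 : ∀ ξ : Measure X, lagrangian ρ ξ 0 f c = ∫ x, f x ∂ξ := fun ξ => by
    simp [lagrangian]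
  have hInnerNe : ∀ ξ : Measure X,
      {w : ℝ | ∃ lam ∈ dualSet m ρ, w = lagrangian ρ ξ lam f c}.Nonempty :=
    fun ξ => ⟨lagrangian ρ ξ 0 f c, 0, hzeroD, rfl⟩
  have hInnerBdd : ∀ ξ : Measure X, IsProbabilityMeasure ξ →
      BddBelow {w : ℝ | ∃ lam ∈ dualSet m ρ, w = lagrangian ρ ξ lam f c} := by
    intro ξ hξ
    refine ⟨-(1/ρ), ?_⟩
    rintro w ⟨lam, hlam, rfl⟩
    haveI := hξ
    exact (lagrangian_bounds ρ lam f c hρ0 hfm hcm hf01 hc01 hlam ξ).1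
  have hOuterNe : ∀ lam : Fin m → ℝ,
      {v : ℝ | ∃ ξ : Measure X, IsProbabilityMeasure ξ ∧ v = lagrangian ρ ξ lam f c}.Nonempty :=
    fun lam => ⟨lagrangian ρ (Measure.dirac x₀) lam f c, Measure.dirac x₀, inferInstance, rfl⟩
  have hOuterBdd : ∀ lam ∈ dualSet m ρ,
      BddAbove {v : ℝ | ∃ ξ : Measure X, IsProbabilityMeasure ξ ∧ v = lagrangian ρ ξ lam f c} := by
    intro lam hlam
    refine ⟨2, ?_⟩
    rintro v ⟨ξ, hξ, rfl⟩
    haveI := hξ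
    exact (lagrangian_bounds ρ lam f c hρ0 hfm hcm hf01 hc01 hlam ξ).2
  set SA : Set ℝ := {v : ℝ | ∃ ξ : Measure X, IsProbabilityMeasure ξ ∧
      v = sInf {w : ℝ | ∃ lam ∈ dualSet m ρ, w = lagrangian ρ ξ lam f c}} with hSAdef
  set SB : Set ℝ := {w : ℝ | ∃ lam ∈ dualSet m ρ,
      w = sSup {v : ℝ | ∃ ξ : Measure X, IsProbabilityMeasure ξ ∧
        v = lagrangian ρ ξ lam f c}} with hSBdef
  have hSAne : SA.Nonempty :=
    ⟨_, Measure.dirac x₀, inferInstance, rfl⟩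
  have hSAbdd : BddAbove SA := by
    refine ⟨1, ?_⟩
    rintro v ⟨ξ, hξ, rfl⟩
    haveI := hξ
    calc sInf {w : ℝ | ∃ lam ∈ dualSet m ρ, w = lagrangian ρ ξ lam f c}
        ≤ lagrangian ρ ξ 0 f c := csInf_le (hInnerBdd ξ hξ) ⟨0, hzeroD, rfl⟩
      _ = ∫ x, f x ∂ξ := hlag0 ξ
      _ ≤ 1 := (integral_bounds hfm hf01 ξ).2
  have hSBne : SB.Nonempty := ⟨_, 0, hzeroD, rfl⟩
  have hSBbdd : BddBelow SB := by
    refine ⟨-(1/ρ), ?_⟩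
    rintro w ⟨lam, hlam, rfl⟩
    refine le_trans ?_ (le_csSup (hOuterBdd lam hlam) ⟨Measure.dirac x₀, inferInstance, rfl⟩)
    exact (lagrangian_bounds ρ lam f c hρ0 hfm hcm hf01 hc01 hlam (Measure.dirac x₀)).1
  have hAB : sSup SA ≤ sInf SB := by
    refine csSup_le hSAne ?_
    rintro v ⟨ξ, hξ, rfl⟩
    refine le_csInf hSBne ?_
    rintro w ⟨lam, hlam, rfl⟩
    haveI := hξ
    exact le_trans (csInf_le (hInnerBdd ξ hξ) ⟨lam, hlam, rfl⟩)
      (le_csSup (hOuterBdd lam hlam) ⟨ξ, hξ, rfl⟩)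
  have hFne : {v : ℝ | ∃ ξ : Measure X, IsProbabilityMeasure ξ ∧
      (∀ j, (∫ x, c x j ∂ξ) ≤ ρ) ∧ v = ∫ x, f x ∂ξ}.Nonempty := by
    refine ⟨∫ x, f x ∂(Measure.dirac x₀), Measure.dirac x₀, inferInstance, fun j => ?_, rfl⟩
    rw [integral_dirac, hc0 j]
    exact hρ0.le
  have hCA : optLP X ρ f c ≤ sSup SA := by
    refine csSup_le hFne ?_
    rintro v ⟨ξ, hξ, hfeas, rfl⟩
    haveI := hξ
    have h1 : (∫ x, f x ∂ξ) ≤ sInf {w : ℝ | ∃ lam ∈ dualSet m ρ, w = lagrangian ρ ξ lam f c} := by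
      refine le_csInf (hInnerNe ξ) ?_
      rintro w ⟨lam, hlam, rfl⟩
      unfold lagrangian
      refine le_add_of_nonneg_right (Finset.sum_nonneg fun j _ => ?_)
      exact mul_nonneg (hlam.1 j) (by linarith [hfeas j])
    exact le_trans h1 (le_csSup hSAbdd ⟨ξ, hξ, rfl⟩)
  have hBC : sInf SB ≤ optLP X ρ f c := by
    refine le_of_forall_pos_le_add ?_
    intro ε hε
    obtain ⟨lam, hlamD, hpt⟩ := exists_dual X x₀ ρ ⟨hρ0, hρ1⟩ f c hfm hcm hf01 hc01 hf0 hc0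
      (show (0:ℝ) < ε/2 by linarith)
    have hpt' : ∀ x, f x + ∑ j, lam j * (ρ - c x j) ≤ optLP X ρ f c + ε := by
      intro x
      have := hpt x
      linarith
    have hout : sSup {v : ℝ | ∃ ξ : Measure X, IsProbabilityMeasure ξ ∧
        v = lagrangian ρ ξ lam f c} ≤ optLP X ρ f c + ε := by
      refine csSup_le (hOuterNe lam) ?_
      rintro v ⟨ξ, hξ, rfl⟩
      haveI := hξ
      exact lagrangian_le_of_pointwise ρ lam f c hfm hcm hf01 hc01 hpt' ξ
    exact le_trans (csInf_le hSBbdd ⟨lam, hlamD, rfl⟩) hout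
  have h2 : sInf SB = optLP X ρ f c := le_antisymm hBC (le_trans hCA hAB)
  exact ⟨le_antisymm hAB (le_trans hBC hCA), h2⟩
end
end

section
/- Let X ⊆ ℝⁿ be a nonempty set endowed with the Lebesgue σ-algebra that contains a void action x₀, let ρ ∈ (0,1], let τ ∈ ℕ, let f_t : X → [0,1] and c_t : X → [0,1]^m (t = 1,…,τ) be measurable with f_t(x₀) = 0 and c_t(x₀) = 0, and let λ_1,…,λ_τ ∈ ℝ^m with λ_t ≥ 0 componentwise. Then sup over strategy mixtures ξ ∈ Ξ of Σ_{t=1}^τ ( E_{x∼ξ}[f_t(x)] + ⟨λ_t, ρ𝟙 − E_{x∼ξ}[c_t(x)]⟩ ) is at least ρ · sup over x ∈ X of Σ_{t=1}^τ f_t(x). -/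
open MeasureTheory

noncomputable section

lemma integrable_dirac' {α : Type*} [MeasurableSpace α] [MeasurableSingletonClass α]
    (x : α) (g : α → ℝ) (hg : Measurable g) : Integrable g (Measure.dirac x) := by
  refine ⟨hg.aestronglyMeasurable, ?_⟩
  unfold HasFiniteIntegral
  rw [lintegral_dirac]
  exact ENNReal.coe_lt_top

lemma mix_integral {α : Type*} [MeasurableSpace α] [MeasurableSingletonClass α]
    (x x₀ : α) (ρ : ℝ) (hρ0 : 0 ≤ ρ) (hρ1 : ρ ≤ 1)
    (g : α → ℝ) (hg : Measurable g) :
    ∫ y, g y ∂(ENNReal.ofReal ρ • Measure.dirac x + ENNReal.ofReal (1-ρ) • Measure.dirac x₀)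
      = ρ * g x + (1-ρ) * g x₀ := by
  rw [integral_add_measure ((integrable_dirac' x g hg).smul_measure ENNReal.ofReal_ne_top)
      ((integrable_dirac' x₀ g hg).smul_measure ENNReal.ofReal_ne_top),
    integral_smul_measure, integral_smul_measure, integral_dirac, integral_dirac]
  simp [ENNReal.toReal_ofReal hρ0, ENNReal.toReal_ofReal (by linarith : (0:ℝ) ≤ 1 - ρ)]

/-- **The key lower bound (Equation "bound a")**: for any nonnegative dual vectors `λ_t`,
the Lagrangified cumulative payoff, maximized over strategy mixtures, is at least a
`ρ`-fraction of the unconstrained optimum `sup_{x ∈ X} Σ_t f_t(x)`. -/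
theorem lagrangified_payoff_ge_rho_unconstrained_opt
    {n m : ℕ} (X : Set (Fin n → ℝ)) (x₀ : X) (ρ : ℝ) (hρ : ρ ∈ Set.Ioc (0 : ℝ) 1)
    (τ : ℕ) (f : ℕ → X → ℝ) (c : ℕ → X → Fin m → ℝ)
    (hfm : ∀ t, Measurable (f t)) (hcm : ∀ t j, Measurable fun x => c t x j)
    (hf01 : ∀ t x, f t x ∈ Set.Icc (0 : ℝ) 1)
    (hc01 : ∀ t x j, c t x j ∈ Set.Icc (0 : ℝ) 1)
    (hf0 : ∀ t, f t x₀ = 0) (hc0 : ∀ t j, c t x₀ j = 0)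
    (lam : ℕ → Fin m → ℝ) (hlam : ∀ t j, 0 ≤ lam t j) :
    sSup {v : ℝ | ∃ ξ : Measure X, IsProbabilityMeasure ξ ∧
        v = ∑ t ∈ Finset.range τ,
          ((∫ x, f t x ∂ξ) + ∑ j, lam t j * (ρ - ∫ x, c t x j ∂ξ))} ≥
      ρ * sSup {v : ℝ | ∃ x : X, v = ∑ t ∈ Finset.range τ, f t x} := by
  obtain ⟨hρ0, hρ1⟩ := hρ
  set S := {v : ℝ | ∃ ξ : Measure X, IsProbabilityMeasure ξ ∧
        v = ∑ t ∈ Finset.range τ,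
          ((∫ x, f t x ∂ξ) + ∑ j, lam t j * (ρ - ∫ x, c t x j ∂ξ))} with hS
  -- S is bounded above
  have hbdd : BddAbove S := by
    refine ⟨∑ t ∈ Finset.range τ, (1 + ∑ j, lam t j * ρ), ?_⟩
    rintro v ⟨ξ, hξ, rfl⟩
    apply Finset.sum_le_sum
    intro t _
    have hint : Integrable (f t) ξ := by
      refine ⟨(hfm t).aestronglyMeasurable, ?_⟩
      apply HasFiniteIntegral.of_bounded (C := 1)
      filter_upwards with x
      rw [Real.norm_eq_abs, abs_le]
      exact ⟨by linarith [(hf01 t x).1], (hf01 t x).2⟩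
    have h1 : ∫ x, f t x ∂ξ ≤ 1 := by
      calc ∫ x, f t x ∂ξ ≤ ∫ _x, (1:ℝ) ∂ξ :=
            integral_mono hint (integrable_const 1) (fun x => (hf01 t x).2)
        _ = 1 := by simp
    have h2 : ∀ j, lam t j * (ρ - ∫ x, c t x j ∂ξ) ≤ lam t j * ρ := by
      intro j
      have : (0:ℝ) ≤ ∫ x, c t x j ∂ξ := integral_nonneg fun x => (hc01 t x j).1
      nlinarith [hlam t j]
    have := Finset.sum_le_sum (fun j _ => h2 j) (s := Finset.univ)
    linarith
  -- 0 ≤ sSup S, via ξ = dirac x₀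
  have h0 : (0:ℝ) ≤ sSup S := by
    have hmem : (∑ t ∈ Finset.range τ, ((0:ℝ) + ∑ j, lam t j * ρ)) ∈ S := by
      refine ⟨Measure.dirac x₀, Measure.dirac.isProbabilityMeasure, ?_⟩
      refine Finset.sum_congr rfl fun t _ => ?_
      rw [integral_dirac, hf0 t]
      congr 1
      refine Finset.sum_congr rfl fun j _ => ?_
      rw [integral_dirac, hc0 t j, sub_zero]
    refine le_trans ?_ (le_csSup hbdd hmem)
    refine Finset.sum_nonneg fun t _ => ?_
    have : (0:ℝ) ≤ ∑ j, lam t j * ρ :=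
      Finset.sum_nonneg fun j _ => mul_nonneg (hlam t j) hρ0.le
    linarith
  -- each value in T satisfies ρ * v ≤ sSup S
  have key : ∀ x : X, ρ * ∑ t ∈ Finset.range τ, f t x ≤ sSup S := by
    intro x
    set ξ := ENNReal.ofReal ρ • Measure.dirac x + ENNReal.ofReal (1-ρ) • Measure.dirac x₀ with hξdef
    have hprob : IsProbabilityMeasure ξ := by
      constructor
      simp only [hξdef, Measure.coe_add, Measure.coe_smul, Pi.add_apply, Pi.smul_apply,
        Measure.dirac_apply_of_mem (Set.mem_univ _), smul_eq_mul, mul_one]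
      rw [← ENNReal.ofReal_add hρ0.le (by linarith)]
      norm_num
    have hmem : (∑ t ∈ Finset.range τ,
        ((∫ y, f t y ∂ξ) + ∑ j, lam t j * (ρ - ∫ y, c t y j ∂ξ))) ∈ S :=
      ⟨ξ, hprob, rfl⟩
    refine le_trans ?_ (le_csSup hbdd hmem)
    rw [Finset.mul_sum]
    apply Finset.sum_le_sum
    intro t _
    rw [mix_integral x x₀ ρ hρ0.le hρ1 (f t) (hfm t), hf0 t]
    have hc' : ∀ j, lam t j * (ρ - ∫ y, c t y j ∂ξ) ≥ 0 := by
      intro j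
      rw [mix_integral x x₀ ρ hρ0.le hρ1 _ (hcm t j), hc0 t j]
      have h1 : (0:ℝ) ≤ ρ * (1 - c t x j) := mul_nonneg hρ0.le (by linarith [(hc01 t x j).2])
      nlinarith [mul_nonneg (hlam t j) h1]
    have : (0:ℝ) ≤ ∑ j, lam t j * (ρ - ∫ y, c t y j ∂ξ) :=
      Finset.sum_nonneg fun j _ => hc' j
    linarith
  -- conclude
  have hT : sSup {v : ℝ | ∃ x : X, v = ∑ t ∈ Finset.range τ, f t x} ≤ sSup S / ρ := by
    apply Real.sSup_le
    · rintro v ⟨x, rfl⟩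
      rw [le_div_iff₀ hρ0, mul_comm]
      exact key x
    · positivity
  calc ρ * sSup {v : ℝ | ∃ x : X, v = ∑ t ∈ Finset.range τ, f t x}
      ≤ ρ * (sSup S / ρ) := by gcongr
    _ = sSup S := by field_simp
end
end

section
/- Fix τ ∈ ℕ, measurable f_t : X → [0,1] and c_t : X → [0,1]^m with f_t(x₀) = 0, c_t(x₀) = 0 for t = 1,…,τ, strategy mixtures ξ_1,…,ξ_τ ∈ Ξ, and dual vectors λ_1,…,λ_τ ∈ D. Suppose the primal regret bound sup_{ξ∈Ξ} Σ_{t=1}^τ ( ℓ^P_t(ξ) − ℓ^P_t(ξ_t) ) ≤ E_P holds, where ℓ^P_t(ξ) = E_{x∼ξ}[f_t(x)] − ⟨λ_t, E_{x∼ξ}[c_t(x)]⟩, and suppose that for a given λ ∈ D the dual regret bound Σ_{t=1}^τ ( ℓ^D_t(λ) − ℓ^D_t(λ_t) ) ≤ E_D holds, where ℓ^D_t(μ) = −⟨μ, ρ𝟙 − E_{x∼ξ_t}[c_t(x)]⟩. Then Σ_{t=1}^τ ( E_{x∼ξ_t}[f_t(x)] − ⟨λ, E_{x∼ξ_t}[c_t(x)]⟩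 ) ≥ −E_P − E_D + ρ · sup_{x∈X} Σ_{t=1}^τ f_t(x) − τ⟨λ, ρ𝟙⟩. -/
open MeasureTheory

noncomputable section

lemma aux_integrable_bdd {n : ℕ} {X : Set (Fin n → ℝ)} (g : X → ℝ) (hg : Measurable g)
    (hb : ∀ y, g y ∈ Set.Icc (0:ℝ) 1) (μ : Measure X) [IsFiniteMeasure μ] :
    Integrable g μ := by
  refine (integrable_const (1:ℝ)).mono' hg.aestronglyMeasurable ?_
  filter_upwards with y
  rw [Real.norm_eq_abs, abs_le]
  exact ⟨by linarith [(hb y).1], (hb y).2⟩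

lemma aux_int_nonneg {n : ℕ} {X : Set (Fin n → ℝ)} (g : X → ℝ)
    (hb : ∀ y, g y ∈ Set.Icc (0:ℝ) 1) (μ : Measure X) :
    0 ≤ ∫ y, g y ∂μ :=
  integral_nonneg fun y => (hb y).1

lemma aux_int_le_one {n : ℕ} {X : Set (Fin n → ℝ)} (g : X → ℝ) (hg : Measurable g)
    (hb : ∀ y, g y ∈ Set.Icc (0:ℝ) 1) (μ : Measure X) [IsProbabilityMeasure μ] :
    ∫ y, g y ∂μ ≤ 1 := by
  calc ∫ y, g y ∂μ ≤ ∫ _, (1:ℝ) ∂μ :=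
        integral_mono (aux_integrable_bdd g hg hb μ) (integrable_const 1) fun y => (hb y).2
    _ = 1 := by simp

lemma mix_prob {n : ℕ} {X : Set (Fin n → ℝ)} (x x₀ : X) (ρ : ℝ) (h0 : 0 ≤ ρ) (h1 : ρ ≤ 1) :
    IsProbabilityMeasure
      (ENNReal.ofReal ρ • Measure.dirac x + ENNReal.ofReal (1-ρ) • Measure.dirac x₀) := by
  constructor
  simp only [Measure.coe_add, Measure.coe_smul, Pi.add_apply, Pi.smul_apply, smul_eq_mul,
    Measure.dirac_apply_of_mem (Set.mem_univ _), mul_one]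
  rw [← ENNReal.ofReal_add h0 (by linarith)]
  norm_num

lemma mix_integral_s4 {n : ℕ} {X : Set (Fin n → ℝ)} (x x₀ : X) (ρ : ℝ) (h0 : 0 ≤ ρ) (h1 : ρ ≤ 1)
    (g : X → ℝ) (hg : Measurable g) (hb : ∀ y, g y ∈ Set.Icc (0:ℝ) 1) :
    ∫ y, g y ∂(ENNReal.ofReal ρ • Measure.dirac x + ENNReal.ofReal (1-ρ) • Measure.dirac x₀)
      = ρ * g x + (1-ρ) * g x₀ := by
  have i1 : Integrable g (Measure.dirac x) := aux_integrable_bdd g hg hb _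
  have i2 : Integrable g (Measure.dirac x₀) := aux_integrable_bdd g hg hb _
  rw [integral_add_measure (i1.smul_measure ENNReal.ofReal_ne_top)
      (i2.smul_measure ENNReal.ofReal_ne_top),
    integral_smul_measure, integral_smul_measure, integral_dirac, integral_dirac,
    ENNReal.toReal_ofReal h0, ENNReal.toReal_ofReal (by linarith : (0:ℝ) ≤ 1 - ρ)]
  simp [smul_eq_mul]

/-- **Deterministic core inequality (Equation "adv Ef Ec")**: if the primal and dual regrets
of the meta-algorithm are bounded by `E_P` and `E_D` respectively, then for the given `λ ∈ D`
the Lagrangified realized (in expectation over the mixtures) payoff satisfies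
`Σ_t (E_{ξ_t}[f_t] − ⟨λ, E_{ξ_t}[c_t]⟩) ≥ −E_P − E_D + ρ·sup_x Σ_t f_t(x) − τ⟨λ, ρ𝟙⟩`. -/
theorem adversarial_core_inequality
    {n m : ℕ} (X : Set (Fin n → ℝ)) (x₀ : X) (ρ : ℝ) (hρ : ρ ∈ Set.Ioc (0 : ℝ) 1)
    (τ : ℕ) (f : ℕ → X → ℝ) (c : ℕ → X → Fin m → ℝ)
    (hfm : ∀ t, Measurable (f t)) (hcm : ∀ t j, Measurable fun x => c t x j)
    (hf01 : ∀ t x, f t x ∈ Set.Icc (0 : ℝ) 1)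
    (hc01 : ∀ t x j, c t x j ∈ Set.Icc (0 : ℝ) 1)
    (hf0 : ∀ t, f t x₀ = 0) (hc0 : ∀ t j, c t x₀ j = 0)
    (ξ : ℕ → Measure X) (hξ : ∀ t, IsProbabilityMeasure (ξ t))
    (lam : ℕ → Fin m → ℝ) (hlamD : ∀ t, lam t ∈ dualSet m ρ)
    (lamFix : Fin m → ℝ) (hlamFix : lamFix ∈ dualSet m ρ)
    (EP ED : ℝ)
    -- primal regret bound w.r.t. ℓ^P_t(ξ') = E_{ξ'}[f_t] − ⟨λ_t, E_{ξ'}[c_t]⟩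
    (hprimal : sSup {v : ℝ | ∃ ξ' : Measure X, IsProbabilityMeasure ξ' ∧
        v = ∑ t ∈ Finset.range τ,
          ((∫ x, f t x ∂ξ') - ∑ j, lam t j * ∫ x, c t x j ∂ξ')} -
      (∑ t ∈ Finset.range τ,
          ((∫ x, f t x ∂(ξ t)) - ∑ j, lam t j * ∫ x, c t x j ∂(ξ t))) ≤ EP)
    -- dual regret bound at λ = lamFix w.r.t. ℓ^D_t(μ) = −⟨μ, ρ𝟙 − E_{ξ_t}[c_t]⟩
    (hdual : ∑ t ∈ Finset.range τ,
        ((-(∑ j, lamFix j * (ρ - ∫ x, c t x j ∂(ξ t)))) -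
         (-(∑ j, lam t j * (ρ - ∫ x, c t x j ∂(ξ t))))) ≤ ED) :
    ∑ t ∈ Finset.range τ,
        ((∫ x, f t x ∂(ξ t)) - ∑ j, lamFix j * ∫ x, c t x j ∂(ξ t)) ≥
      -EP - ED + ρ * sSup {v : ℝ | ∃ x : X, v = ∑ t ∈ Finset.range τ, f t x} -
        τ * ∑ j, lamFix j * ρ := by
  obtain ⟨hρ0, hρ1⟩ := hρ
  set Pset : Set ℝ := {v : ℝ | ∃ ξ' : Measure X, IsProbabilityMeasure ξ' ∧
        v = ∑ t ∈ Finset.range τ,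
          ((∫ x, f t x ∂ξ') - ∑ j, lam t j * ∫ x, c t x j ∂ξ')} with hPset
  set Mset : Set ℝ := {v : ℝ | ∃ x : X, v = ∑ t ∈ Finset.range τ, f t x} with hMset
  set A : ℕ → Fin m → ℝ := fun t j => ∫ x, c t x j ∂(ξ t) with hA
  set K : ℝ := ∑ t ∈ Finset.range τ, ∑ j, lam t j with hK
  -- bound on the primal set
  have hbdd : BddAbove Pset := by
    refine ⟨τ, fun v hv => ?_⟩
    obtain ⟨ξ', hξ', rfl⟩ := hv
    calc ∑ t ∈ Finset.range τ, ((∫ x, f t x ∂ξ') - ∑ j, lam t j * ∫ x, c t x j ∂ξ')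
        ≤ ∑ t ∈ Finset.range τ, (1:ℝ) := by
          refine Finset.sum_le_sum fun t _ => ?_
          have h1 : ∫ x, f t x ∂ξ' ≤ 1 := aux_int_le_one _ (hfm t) (hf01 t) ξ'
          have h2 : 0 ≤ ∑ j, lam t j * ∫ x, c t x j ∂ξ' := by
            refine Finset.sum_nonneg fun j _ => mul_nonneg ((hlamD t).1 j)
              (aux_int_nonneg _ (fun y => hc01 t y j) ξ')
          linarith
      _ = τ := by simp
  -- step 3 : ρ * sSup Mset ≤ sSup Pset + ρ * K
  have hstep3 : ρ * sSup Mset ≤ sSup Pset + ρ * K := by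
    have hub : ∀ v ∈ Mset, v ≤ (sSup Pset + ρ * K) / ρ := by
      rintro v ⟨x, rfl⟩
      set ξ' : Measure X :=
        ENNReal.ofReal ρ • Measure.dirac x + ENNReal.ofReal (1-ρ) • Measure.dirac x₀ with hξ'
      have hprob : IsProbabilityMeasure ξ' := mix_prob x x₀ ρ hρ0.le hρ1
      have hval : (∑ t ∈ Finset.range τ,
          ((∫ y, f t y ∂ξ') - ∑ j, lam t j * ∫ y, c t y j ∂ξ')) ∈ Pset := ⟨ξ', hprob, rfl⟩
      have hle := le_csSup hbdd hval
      have hcomp : ∀ t ∈ Finset.range τ,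
          ρ * f t x - ρ * ∑ j, lam t j ≤
            (∫ y, f t y ∂ξ') - ∑ j, lam t j * ∫ y, c t y j ∂ξ' := by
        intro t _
        have hf' : ∫ y, f t y ∂ξ' = ρ * f t x := by
          rw [hξ', mix_integral_s4 x x₀ ρ hρ0.le hρ1 _ (hfm t) (hf01 t), hf0 t]; ring
        have hc' : ∀ j, ∫ y, c t y j ∂ξ' = ρ * c t x j := by
          intro j
          rw [hξ', mix_integral_s4 x x₀ ρ hρ0.le hρ1 _ (hcm t j) (fun y => hc01 t y j), hc0 t j]
          ring
        rw [hf']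
        have : ∑ j, lam t j * ∫ y, c t y j ∂ξ' ≤ ρ * ∑ j, lam t j := by
          rw [Finset.mul_sum]
          refine Finset.sum_le_sum fun j _ => ?_
          rw [hc' j]
          have := mul_le_mul_of_nonneg_left (hc01 t x j).2 (mul_nonneg ((hlamD t).1 j) hρ0.le)
          calc lam t j * (ρ * c t x j) = lam t j * ρ * c t x j := by ring
            _ ≤ lam t j * ρ * 1 := by
                exact mul_le_mul_of_nonneg_left (hc01 t x j).2
                  (mul_nonneg ((hlamD t).1 j) hρ0.le)
            _ = ρ * lam t j := by ring
        linarith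
      have hsum := Finset.sum_le_sum hcomp
      have hkey : ρ * (∑ t ∈ Finset.range τ, f t x) - ρ * K ≤ sSup Pset := by
        have : ∑ t ∈ Finset.range τ, (ρ * f t x - ρ * ∑ j, lam t j) =
            ρ * (∑ t ∈ Finset.range τ, f t x) - ρ * K := by
          rw [Finset.sum_sub_distrib, ← Finset.mul_sum, ← Finset.mul_sum, hK]
        linarith
      rw [le_div_iff₀ hρ0]
      linarith [hkey]
    have hne : Mset.Nonempty := ⟨_, x₀, rfl⟩
    have := csSup_le hne hub
    have h2 := mul_le_mul_of_nonneg_left this hρ0.le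
    rwa [mul_div_cancel₀ _ (ne_of_gt hρ0)] at h2
  -- algebraic identities
  have hlamA : ∑ t ∈ Finset.range τ, ∑ j, lam t j * A t j =
      ρ * K - ∑ t ∈ Finset.range τ, ∑ j, lam t j * (ρ - A t j) := by
    rw [hK, Finset.mul_sum, ← Finset.sum_sub_distrib]
    refine Finset.sum_congr rfl fun t _ => ?_
    rw [Finset.mul_sum, ← Finset.sum_sub_distrib]
    refine Finset.sum_congr rfl fun j _ => by ring
  have hlamFixA : ∑ t ∈ Finset.range τ, ∑ j, lamFix j * A t j =
      τ * (∑ j, lamFix j * ρ) - ∑ t ∈ Finset.range τ, ∑ j, lamFix j * (ρ - A t j) := by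
    have : (τ : ℝ) * (∑ j, lamFix j * ρ) =
        ∑ _t ∈ Finset.range τ, ∑ j, lamFix j * ρ := by
      rw [Finset.sum_const, Finset.card_range, nsmul_eq_mul]
    rw [this, ← Finset.sum_sub_distrib]
    refine Finset.sum_congr rfl fun t _ => ?_
    rw [← Finset.sum_sub_distrib]
    refine Finset.sum_congr rfl fun j _ => by ring
  have hdual' : (∑ t ∈ Finset.range τ, ∑ j, lam t j * (ρ - A t j)) -
      (∑ t ∈ Finset.range τ, ∑ j, lamFix j * (ρ - A t j)) ≤ ED := by
    rw [← Finset.sum_sub_distrib]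
    calc ∑ t ∈ Finset.range τ,
          ((∑ j, lam t j * (ρ - A t j)) - ∑ j, lamFix j * (ρ - A t j))
        = ∑ t ∈ Finset.range τ,
          ((-(∑ j, lamFix j * (ρ - A t j))) - (-(∑ j, lam t j * (ρ - A t j)))) := by
          refine Finset.sum_congr rfl fun t _ => by ring
      _ ≤ ED := hdual
  -- assemble
  have hsplit : ∑ t ∈ Finset.range τ, ((∫ x, f t x ∂(ξ t)) - ∑ j, lamFix j * A t j) =
      (∑ t ∈ Finset.range τ, ((∫ x, f t x ∂(ξ t)) - ∑ j, lam t j * A t j)) +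
      (∑ t ∈ Finset.range τ, ∑ j, lam t j * A t j) -
      (∑ t ∈ Finset.range τ, ∑ j, lamFix j * A t j) := by
    rw [Finset.sum_sub_distrib, Finset.sum_sub_distrib]
    ring
  rw [ge_iff_le]
  have hP := hprimal
  linarith [hsplit, hlamA, hlamFixA, hdual', hstep3, hP]
end
end

section
/- In the repeated Stackelberg game with costly resources, let ℓ_{L,t}(x,λ) = f_t(x) − ⟨λ, xᵀC_t⟩ for every leader strategy x ∈ X = Δ(A_L), dual λ ∈ ℝ^m_{≥0}, follower type k_t, and cost matrix C_t. Then for every horizon τ ∈ [T], every sequence of follower types (k_t)_{t=1}^τ, every sequence of cost matrices (C_t)_{t=1}^τ, and every sequence (λ_t)_{t=1}^τ, it holds that max over x* in the finite set X* of Σ_{t=1}^τ ℓ_{L,t}(x*, λ_t) equals max over x ∈ X of Σ_{t=1}^τ ℓ_{L,t}(x, λ_t). -/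
open MeasureTheory

noncomputable section

/-- The set of best responses of follower type `k` to leader strategy `x`. -/
def brSet {nL nF : ℕ} {K : Type*} (Uk : K → Fin nL → Fin nF → ℝ) (k : K)
    (x : Fin nL → ℝ) : Set (Fin nF) :=
  {a | ∀ a', ∑ j, x j * Uk k j a' ≤ ∑ j, x j * Uk k j a}

/-- The leader's reward against a follower of type `k`, with ties broken in favor of the
leader: `f(x) = max_{a best response of k to x} xᵀ U_L e_a`. -/
def leaderReward {nL nF : ℕ} {K : Type*} (Uk : K → Fin nL → Fin nF → ℝ)
    (UL : Fin nL → Fin nF → ℝ) (k : K) (x : Fin nL → ℝ) : ℝ :=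
  sSup ((fun a => ∑ j, x j * UL j a) '' brSet Uk k x)

/-- The polytope of leader strategies for which `avec k` is a best response of every type `k`. -/
def brPolytope {nL nF : ℕ} {K : Type*} (Uk : K → Fin nL → Fin nF → ℝ)
    (avec : K → Fin nF) : Set (Fin nL → ℝ) :=
  {x ∈ stdSimplex ℝ (Fin nL) | ∀ k, avec k ∈ brSet Uk k x}

/-- `X*`: the union, over tuples of follower actions (one per type), of the vertex sets
(extreme points) of the corresponding best-response polytopes. -/
def Xstar {nL nF : ℕ} {K : Type*} (Uk : K → Fin nL → Fin nF → ℝ) : Set (Fin nL → ℝ) :=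
  ⋃ avec : K → Fin nF, Set.extremePoints ℝ (brPolytope Uk avec)

/-!
Fix a leader strategy `x` and let `a⃗` collect, type by type, the tie-broken best responses to `x`.
Throughout the polytope `X^{a⃗}` each `a⃗ k` stays a best response of type `k`, so the leader's
tie-broken reward is at least her reward against `a⃗`: on `X^{a⃗}` the cumulative Lagrangian
dominates the linear function obtained by freezing the follower responses at `a⃗`, with equality
at `x`. A linear function attains its maximum over the compact set `X^{a⃗}` at an extreme point,
which lies in `X*` and therefore has Lagrangian at least that at `x`. Every value over `X` is
thus dominated by a value over `X*`, and the suprema coincide.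
-/

theorem IsCompact.exists_mem_extremePoints_isMaxOn {E : Type*} [AddCommGroup E] [Module ℝ E]
    [TopologicalSpace E] [T2Space E] [IsTopologicalAddGroup E] [ContinuousSMul ℝ E]
    [LocallyConvexSpace ℝ E] {s : Set E} (hs : IsCompact s) (hne : s.Nonempty)
    (l : StrongDual ℝ E) : ∃ z ∈ s.extremePoints ℝ, IsMaxOn l s z := by
  obtain ⟨y, hys, hy⟩ := hs.exists_isMaxOn hne l.continuous.continuousOn
  have hexposed : IsExposed ℝ s {z ∈ s | ∀ w ∈ s, l w ≤ l z} := fun _ => ⟨l, rfl⟩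
  obtain ⟨z, hz⟩ := (hexposed.isCompact hs).extremePoints_nonempty ⟨y, hys, hy⟩
  exact ⟨z, hexposed.isExtreme.extremePoints_subset_extremePoints hz, hz.1.2⟩

theorem isClosed_setOf_dotProduct_le {ι : Type*} [Fintype ι] (u v : ι → ℝ) :
    IsClosed {x : ι → ℝ | x ⬝ᵥ u ≤ x ⬝ᵥ v} :=
  isClosed_le (continuous_id.dotProduct continuous_const)
    (continuous_id.dotProduct continuous_const)

section BestResponse

variable {nL nF : ℕ} {K : Type*} (Uk : K → Fin nL → Fin nF → ℝ)

theorem brSet_nonempty (hnF : 0 < nF) (k : K) (x : Fin nL → ℝ) : (brSet Uk k x).Nonempty :=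
  have : Nonempty (Fin nF) := Fin.pos_iff_nonempty.mp hnF
  Finite.exists_max fun a => ∑ j, x j * Uk k j a

theorem le_leaderReward (UL : Fin nL → Fin nF → ℝ) {k : K} {x : Fin nL → ℝ} {a : Fin nF}
    (ha : a ∈ brSet Uk k x) : ∑ j, x j * UL j a ≤ leaderReward Uk UL k x :=
  le_csSup ((Set.toFinite _).image _).bddAbove ⟨a, ha, rfl⟩

theorem exists_leaderReward_eq (hnF : 0 < nF) (UL : Fin nL → Fin nF → ℝ) (k : K)
    (x : Fin nL → ℝ) : ∃ a ∈ brSet Uk k x, leaderReward Uk UL k x = ∑ j, x j * UL j a := by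
  have hmem : leaderReward Uk UL k x ∈ (fun a => ∑ j, x j * UL j a) '' brSet Uk k x :=
    ((brSet_nonempty Uk hnF k x).image _).csSup_mem ((Set.toFinite _).image _)
  obtain ⟨a, ha, hmax⟩ := hmem
  exact ⟨a, ha, hmax.symm⟩

theorem brPolytope_eq_inter_iInter (avec : K → Fin nF) :
    brPolytope Uk avec = stdSimplex ℝ (Fin nL) ∩ ⋂ (k : K) (a' : Fin nF),
      {x | x ⬝ᵥ (fun j => Uk k j a') ≤ x ⬝ᵥ (fun j => Uk k j (avec k))} := by
  ext x
  simp only [brPolytope, brSet, dotProduct, Set.mem_inter_iff, Set.mem_iInter]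
  rfl

theorem isCompact_brPolytope (avec : K → Fin nF) : IsCompact (brPolytope Uk avec) := by
  rw [brPolytope_eq_inter_iInter]
  exact (isCompact_stdSimplex ℝ _).inter_right
    (isClosed_iInter fun k => isClosed_iInter fun _ => isClosed_setOf_dotProduct_le _ _)

theorem exists_mem_brPolytope_leaderReward_eq (hnF : 0 < nF) (UL : Fin nL → Fin nF → ℝ)
    {x : Fin nL → ℝ} (hx : x ∈ stdSimplex ℝ (Fin nL)) :
    ∃ avec : K → Fin nF, x ∈ brPolytope Uk avec ∧
      ∀ k, leaderReward Uk UL k x = ∑ j, x j * UL j (avec k) := by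
  choose avec hbr heq using fun k => exists_leaderReward_eq Uk hnF UL k x
  exact ⟨avec, ⟨hx, hbr⟩, heq⟩

theorem Xstar_subset_stdSimplex : Xstar Uk ⊆ stdSimplex ℝ (Fin nL) :=
  Set.iUnion_subset fun _ => extremePoints_subset.trans (Set.sep_subset _ _)

end BestResponse

section Lagrangian

variable {nL m : ℕ} (τ : ℕ) (Cmat : ℕ → Fin nL → Fin m → ℝ) (lam : ℕ → Fin m → ℝ)

/-- `Σ_{t<τ} ℓ_{L,t}(x, λ_t)`, with the leader's per-round reward left as a parameter. -/
def cumulativeLagrangian (reward : ℕ → (Fin nL → ℝ) → ℝ) (x : Fin nL → ℝ) : ℝ :=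
  ∑ t ∈ Finset.range τ, (reward t x - ∑ i, lam t i * ∑ j, x j * Cmat t j i)

theorem cumulativeLagrangian_le_cumulativeLagrangian {reward reward' : ℕ → (Fin nL → ℝ) → ℝ}
    {x : Fin nL → ℝ} (h : ∀ t, reward t x ≤ reward' t x) :
    cumulativeLagrangian τ Cmat lam reward x ≤ cumulativeLagrangian τ Cmat lam reward' x :=
  Finset.sum_le_sum fun t _ => sub_le_sub_right (h t) _

theorem cumulativeLagrangian_dotProduct (w : ℕ → Fin nL → ℝ) (x : Fin nL → ℝ) :
    cumulativeLagrangian τ Cmat lam (fun t y => y ⬝ᵥ w t) x =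
      x ⬝ᵥ ∑ t ∈ Finset.range τ, (w t - ∑ i, lam t i • fun j => Cmat t j i) := by
  simp only [cumulativeLagrangian, dotProduct_sum, dotProduct_sub, dotProduct_smul, smul_eq_mul]
  rfl

end Lagrangian

theorem exists_mem_Xstar_cumulativeLagrangian_le {nL nF m : ℕ} (hnF : 0 < nF) {K : Type*}
    (Uk : K → Fin nL → Fin nF → ℝ) (UL : Fin nL → Fin nF → ℝ) (τ : ℕ) (k : ℕ → K)
    (Cmat : ℕ → Fin nL → Fin m → ℝ) (lam : ℕ → Fin m → ℝ) {x : Fin nL → ℝ}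
    (hx : x ∈ stdSimplex ℝ (Fin nL)) :
    ∃ z ∈ Xstar Uk,
      cumulativeLagrangian τ Cmat lam (fun t => leaderReward Uk UL (k t)) x ≤
        cumulativeLagrangian τ Cmat lam (fun t => leaderReward Uk UL (k t)) z := by
  obtain ⟨avec, hxP, hreward⟩ := exists_mem_brPolytope_leaderReward_eq Uk hnF UL hx
  set frozen := cumulativeLagrangian τ Cmat lam fun t y => y ⬝ᵥ fun j => UL j (avec (k t))
  obtain ⟨c, hc⟩ : ∃ c, ∀ y, frozen y = y ⬝ᵥ c :=
    ⟨_, cumulativeLagrangian_dotProduct τ Cmat lam _⟩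
  obtain ⟨z, hz, hmax⟩ := (isCompact_brPolytope Uk avec).exists_mem_extremePoints_isMaxOn
    ⟨x, hxP⟩ (LinearMap.toContinuousLinearMap ((dotProductBilin ℝ ℝ).flip c))
  have hzP : z ∈ brPolytope Uk avec := extremePoints_subset hz
  refine ⟨z, Set.mem_iUnion_of_mem avec hz, ?_⟩
  calc cumulativeLagrangian τ Cmat lam (fun t => leaderReward Uk UL (k t)) x
      = frozen x := by simp only [frozen, cumulativeLagrangian, hreward]; rfl
    _ ≤ frozen z := by simpa [hc] using hmax hxP
    _ ≤ _ := cumulativeLagrangian_le_cumulativeLagrangian τ Cmat lam fun t =>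
        le_leaderReward Uk UL (hzP.2 (k t))

theorem stackelberg_opt_on_vertices_general
    {nL nF m : ℕ} (hnF : 0 < nF)
    {K : Type*}
    (Uk : K → Fin nL → Fin nF → ℝ) (UL : Fin nL → Fin nF → ℝ)
    (τ : ℕ) (k : ℕ → K) (Cmat : ℕ → Fin nL → Fin m → ℝ)
    (lam : ℕ → Fin m → ℝ) :
    sSup {v : ℝ | ∃ x ∈ Xstar Uk, v = ∑ t ∈ Finset.range τ,
        (leaderReward Uk UL (k t) x - ∑ i, lam t i * ∑ j, x j * Cmat t j i)} =
    sSup {v : ℝ | ∃ x ∈ stdSimplex ℝ (Fin nL), v = ∑ t ∈ Finset.range τ,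
        (leaderReward Uk UL (k t) x - ∑ i, lam t i * ∑ j, x j * Cmat t j i)} := by
  refine csSup_eq_csSup_of_forall_exists_le ?_ ?_
  · rintro _ ⟨x, hx, rfl⟩
    exact ⟨_, ⟨x, Xstar_subset_stdSimplex Uk hx, rfl⟩, le_rfl⟩
  · rintro _ ⟨x, hx, rfl⟩
    obtain ⟨z, hz, hle⟩ := exists_mem_Xstar_cumulativeLagrangian_le hnF Uk UL τ k Cmat lam hx
    exact ⟨_, ⟨z, hz, rfl⟩, hle⟩

/-- **Restriction to the finite vertex set `X*` is without loss** (Lemma on Stackelberg games):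
for every horizon `τ`, sequence of follower types `k_t`, cost matrices `C_t`, and
nonnegative dual vectors `λ_t`, the maximum of the cumulative Lagrangified leader payoff
`Σ_t ℓ_{L,t}(x, λ_t)` over `X*` equals its maximum over all of `X = Δ(A_L)`. -/
theorem stackelberg_opt_on_vertices
    {nL nF m : ℕ} (hnL : 0 < nL) (hnF : 0 < nF)
    {K : Type*} [Fintype K] [Nonempty K]
    (Uk : K → Fin nL → Fin nF → ℝ) (UL : Fin nL → Fin nF → ℝ)
    (hUL01 : ∀ x ∈ stdSimplex ℝ (Fin nL), ∀ a, (∑ j, x j * UL j a) ∈ Set.Icc (0 : ℝ) 1)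
    (τ : ℕ) (k : ℕ → K) (Cmat : ℕ → Fin nL → Fin m → ℝ)
    (hC01 : ∀ t j i, Cmat t j i ∈ Set.Icc (0 : ℝ) 1)
    (lam : ℕ → Fin m → ℝ) (hlam : ∀ t i, 0 ≤ lam t i) :
    sSup {v : ℝ | ∃ x ∈ Xstar Uk, v = ∑ t ∈ Finset.range τ,
        (leaderReward Uk UL (k t) x - ∑ i, lam t i * ∑ j, x j * Cmat t j i)} =
    sSup {v : ℝ | ∃ x ∈ stdSimplex ℝ (Fin nL), v = ∑ t ∈ Finset.range τ,
        (leaderReward Uk UL (k t) x - ∑ i, lam t i * ∑ j, x j * Cmat t j i)} :=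
  stackelberg_opt_on_vertices_general hnF Uk UL τ k Cmat lam
end
end

section
/- In the continuous first-price setting, for every sequence (v_t, m_t, λ_t)_{t=1}^T with v_t, m_t ∈ [0,1] and λ_t ∈ [0, 1/ρ], and every ε ∈ [1/T, 1], it holds that sup over 1-Lipschitz policies π* ∈ Π_L of Σ_{t=1}^T ( f_t(π*(v_t)) − λ_t c_t(π*(v_t)) ) minus max over thresholded policies φ ∈ Φ_ε of Σ_{t=1}^T ( f_t(φ(v_t, λ_t)) − λ_t c_t(φ(v_t, λ_t)) ) is at most 7εT/ρ. -/
open MeasureTheory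

noncomputable section

/-- Rounding `x` down to the grid of step `y`: `⌊x⌋_y = y·⌊x/y⌋`. -/
def floorTo (y x : ℝ) : ℝ := y * ⌊x / y⌋

/-- `x` is a grid point of step `y` inside `[0,1]`. -/
def IsGridPoint (y x : ℝ) : Prop := x ∈ Set.Icc (0 : ℝ) 1 ∧ ∃ k : ℕ, x = k * y

lemma floorTo_le {y x : ℝ} (hy : 0 < y) : floorTo y x ≤ x := by
  have h := Int.floor_le (x / y)
  calc y * ⌊x / y⌋ ≤ y * (x / y) := by nlinarith
    _ = x := by field_simp

lemma lt_floorTo_add {y x : ℝ} (hy : 0 < y) : x - y < floorTo y x := by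
  have h := Int.sub_one_lt_floor (x / y)
  have : y * (x / y - 1) < y * ⌊x / y⌋ := by nlinarith
  calc x - y = y * (x / y - 1) := by field_simp
    _ < floorTo y x := this

lemma isGridPoint_floorTo {ε x : ℝ} (hε : 0 < ε) (hx : x ∈ Set.Icc (0:ℝ) 1) :
    IsGridPoint ε (floorTo ε x) := by
  have h0 : (0:ℤ) ≤ ⌊x / ε⌋ := Int.floor_nonneg.2 (div_nonneg hx.1 hε.le)
  refine ⟨⟨?_, ?_⟩, ⟨⌊x / ε⌋.toNat, ?_⟩⟩
  · have : (0:ℝ) ≤ (⌊x / ε⌋ : ℝ) := by exact_mod_cast h0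
    have := mul_nonneg hε.le this
    simpa [floorTo] using this
  · exact (floorTo_le hε).trans hx.2
  · rw [floorTo]
    rw [show ((⌊x / ε⌋.toNat : ℝ)) = ((⌊x / ε⌋ : ℝ)) from by
      exact_mod_cast congrArg Int.cast (Int.toNat_of_nonneg h0), mul_comm]

lemma grid_sep {ε x y : ℝ} (hε : 0 < ε) (hx : IsGridPoint ε x) (hy : IsGridPoint ε y)
    (hxy : x ≠ y) : ε ≤ |x - y| := by
  obtain ⟨-, k, rfl⟩ := hx
  obtain ⟨-, j, rfl⟩ := hy
  have hkj : k ≠ j := by rintro rfl; exact hxy rfl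
  have h1 : (1:ℝ) ≤ |(k:ℝ) - j| := by
    rcases lt_or_gt_of_ne hkj with h | h
    · have : (k:ℝ) + 1 ≤ j := by exact_mod_cast h
      rw [abs_sub_comm, abs_of_nonneg (by linarith)]; linarith
    · have : (j:ℝ) + 1 ≤ k := by exact_mod_cast h
      rw [abs_of_nonneg (by linarith)]; linarith
  calc ε = 1 * ε := (one_mul ε).symm
    _ ≤ |(k:ℝ) - j| * ε := by nlinarith
    _ = |(k:ℝ) * ε - j * ε| := by rw [← sub_mul, abs_mul, abs_of_pos hε]


set_option maxHeartbeats 1000000 in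
/-- **Discretization lemma for the continuous first-price setting** (Lemma
"apxDiscretized"): for every sequence `(v_t, m_t, λ_t)` and every `ε ∈ [1/T, 1]`,
the best cumulative Lagrangified payoff over 1-Lipschitz policies `π* ∈ Π_L` exceeds the
best cumulative Lagrangified payoff over thresholded policies `φ ∈ Φ_ε` by at most `7εT/ρ`. -/
theorem first_price_discretization_error
    (T : ℕ) (hT : 1 ≤ T) (ρ ε : ℝ)
    (hρ : ρ ∈ Set.Ioc (0 : ℝ) 1)
    (hε : ε ∈ Set.Icc (1 / (T : ℝ)) 1)
    (v mb lam : ℕ → ℝ)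
    (hv : ∀ t, v t ∈ Set.Icc (0 : ℝ) 1)
    (hm : ∀ t, mb t ∈ Set.Icc (0 : ℝ) 1)
    (hlam : ∀ t, lam t ∈ Set.Icc (0 : ℝ) (1 / ρ)) :
    sSup {val : ℝ | ∃ π : ℝ → ℝ, LipschitzOnWith 1 π (Set.Icc 0 1) ∧
        Set.MapsTo π (Set.Icc 0 1) (Set.Icc 0 1) ∧
        val = ∑ t ∈ Finset.range T,
          (if mb t ≤ π (v t) then (v t - π (v t)) - lam t * π (v t) else 0)} -
    sSup {val : ℝ | ∃ πh : ℝ → ℝ,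
        -- `πh` restricted to the grid `V_ε` takes values in the bid grid `B_{1/T}` ∩ [0,1]
        (∀ x, IsGridPoint ε x → πh x ∈ Set.Icc (0 : ℝ) 1 ∧ ∃ k : ℕ, πh x = (k : ℝ) / T) ∧
        -- `πh` is 2-Lipschitz on the grid `V_ε`
        (∀ x y, IsGridPoint ε x → IsGridPoint ε y → |πh x - πh y| ≤ 2 * |x - y|) ∧
        -- cumulative Lagrangified payoff of the thresholded policy `γ(πh)`
        val = ∑ t ∈ Finset.range T,
          (if mb t ≤ min (πh (floorTo ε (v t)) + 2 * ε) (v t / (1 + lam t)) then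
            (v t - min (πh (floorTo ε (v t)) + 2 * ε) (v t / (1 + lam t))) -
              lam t * min (πh (floorTo ε (v t)) + 2 * ε) (v t / (1 + lam t))
          else 0)}
    ≤ 7 * ε * T / ρ := by
  obtain ⟨hρ0, hρ1⟩ := hρ
  obtain ⟨hε1, hε2⟩ := hε
  have hT0 : (0:ℝ) < T := by exact_mod_cast hT
  have hT1 : (0:ℝ) < 1 / T := by positivity
  have hε0 : 0 < ε := lt_of_lt_of_le hT1 hε1
  have hinvρ : (1:ℝ) ≤ 1 / ρ := by
    rw [le_div_iff₀ hρ0]; linarith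
  set S1 := {val : ℝ | ∃ π : ℝ → ℝ, LipschitzOnWith 1 π (Set.Icc 0 1) ∧
        Set.MapsTo π (Set.Icc 0 1) (Set.Icc 0 1) ∧
        val = ∑ t ∈ Finset.range T,
          (if mb t ≤ π (v t) then (v t - π (v t)) - lam t * π (v t) else 0)} with hS1def
  set S2 := {val : ℝ | ∃ πh : ℝ → ℝ,
        (∀ x, IsGridPoint ε x → πh x ∈ Set.Icc (0 : ℝ) 1 ∧ ∃ k : ℕ, πh x = (k : ℝ) / T) ∧
        (∀ x y, IsGridPoint ε x → IsGridPoint ε y → |πh x - πh y| ≤ 2 * |x - y|) ∧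
        val = ∑ t ∈ Finset.range T,
          (if mb t ≤ min (πh (floorTo ε (v t)) + 2 * ε) (v t / (1 + lam t)) then
            (v t - min (πh (floorTo ε (v t)) + 2 * ε) (v t / (1 + lam t))) -
              lam t * min (πh (floorTo ε (v t)) + 2 * ε) (v t / (1 + lam t))
          else 0)} with hS2def
  -- S1 is nonempty
  have hS1ne : S1.Nonempty := by
    refine ⟨_, ⟨fun _ => 0, ?_, ?_, rfl⟩⟩
    · intro x hx y hy; simp
    · intro x hx; exact ⟨le_rfl, zero_le_one⟩
  -- S2 is bounded above by T
  have hS2bdd : BddAbove S2 := by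
    refine ⟨T, ?_⟩
    rintro val ⟨πh, hπh1, hπh2, rfl⟩
    calc ∑ t ∈ Finset.range T, _ ≤ ∑ t ∈ Finset.range T, (1:ℝ) := by
          apply Finset.sum_le_sum
          intro t ht
          split
          · set b := min (πh (floorTo ε (v t)) + 2 * ε) (v t / (1 + lam t)) with hb
            have hgrid := isGridPoint_floorTo hε0 (hv t)
            have hπh0 : 0 ≤ πh (floorTo ε (v t)) := (hπh1 _ hgrid).1.1
            have hl0 : 0 ≤ lam t := (hlam t).1
            have hb0 : 0 ≤ b := le_min (by linarith) (div_nonneg (hv t).1 (by linarith))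
            nlinarith [(hv t).2, mul_nonneg hl0 hb0]
          · norm_num
      _ = T := by simp
  -- key inequality: every element of S1 is at most sSup S2 + 6εT/ρ
  have hkey : ∀ V1 ∈ S1, V1 ≤ sSup S2 + 6 * ε * T / ρ := by
    rintro V1 ⟨π, hLip, hMaps, rfl⟩
    set πh : ℝ → ℝ := fun x => floorTo (1/T) (min (π x) x) with hπhdef
    have hmin_mem : ∀ x ∈ Set.Icc (0:ℝ) 1, min (π x) x ∈ Set.Icc (0:ℝ) 1 := by
      intro x hx
      have hpx := hMaps hx
      exact ⟨le_min hpx.1 hx.1, (min_le_right _ _).trans hx.2⟩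
    -- property 1 of πh
    have hπh1 : ∀ x, IsGridPoint ε x → πh x ∈ Set.Icc (0:ℝ) 1 ∧ ∃ k : ℕ, πh x = (k:ℝ) / T := by
      intro x hx
      have hxm := hx.1
      have ha := hmin_mem x hxm
      have h0 : (0:ℤ) ≤ ⌊min (π x) x / (1/T)⌋ :=
        Int.floor_nonneg.2 (div_nonneg ha.1 hT1.le)
      constructor
      · constructor
        · have : (0:ℝ) ≤ (⌊min (π x) x / (1/T)⌋ : ℝ) := by exact_mod_cast h0
          have := mul_nonneg hT1.le this
          simpa [πh, floorTo] using this
        · exact (floorTo_le hT1).trans ha.2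
      · refine ⟨(⌊min (π x) x / (1/T)⌋).toNat, ?_⟩
        show floorTo (1/T) (min (π x) x) = _
        rw [floorTo]
        rw [show ((((⌊min (π x) x / (1/T)⌋).toNat : ℕ) : ℝ)) = ((⌊min (π x) x / (1/T)⌋ : ℝ)) from by
          exact_mod_cast congrArg Int.cast (Int.toNat_of_nonneg h0)]
        field_simp
    -- Lipschitz-type inequality for π on [0,1]
    have hlipR : ∀ x ∈ Set.Icc (0:ℝ) 1, ∀ y ∈ Set.Icc (0:ℝ) 1, |π x - π y| ≤ |x - y| := by
      intro x hx y hy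
      have := hLip.dist_le_mul x hx y hy
      simpa [Real.dist_eq] using this
    -- property 2 of πh
    have hπh2 : ∀ x y, IsGridPoint ε x → IsGridPoint ε y → |πh x - πh y| ≤ 2 * |x - y| := by
      intro x y hx hy
      rcases eq_or_ne x y with rfl | hne
      · simp
      have hsep := grid_sep hε0 hx hy hne
      have hmin : |min (π x) x - min (π y) y| ≤ |x - y| := by
        have h1 := hlipR x hx.1 y hy.1
        have h2 : |min (π x) x - min (π y) y| ≤ max |π x - π y| |x - y| :=
          abs_min_sub_min_le_max _ _ _ _
        exact h2.trans (max_le h1 le_rfl)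
      have hfx1 : πh x ≤ min (π x) x := floorTo_le hT1
      have hfx2 : min (π x) x - 1/T < πh x := lt_floorTo_add hT1
      have hfy1 : πh y ≤ min (π y) y := floorTo_le hT1
      have hfy2 : min (π y) y - 1/T < πh y := lt_floorTo_add hT1
      have habs : |πh x - πh y| ≤ |min (π x) x - min (π y) y| + 1/T := by
        rcases abs_cases (πh x - πh y) with ⟨he, _⟩ | ⟨he, _⟩ <;>
          rcases abs_cases (min (π x) x - min (π y) y) with ⟨he', _⟩ | ⟨he', _⟩ <;> linarith
      calc |πh x - πh y| ≤ |x - y| + 1/T := by linarith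
        _ ≤ |x - y| + |x - y| := by linarith [hε1.trans hsep]
        _ = 2 * |x - y| := by ring
    -- per-round inequality
    have hterm : ∀ t,
        (if mb t ≤ π (v t) then (v t - π (v t)) - lam t * π (v t) else 0) ≤
        (if mb t ≤ min (πh (floorTo ε (v t)) + 2 * ε) (v t / (1 + lam t)) then
            (v t - min (πh (floorTo ε (v t)) + 2 * ε) (v t / (1 + lam t))) -
              lam t * min (πh (floorTo ε (v t)) + 2 * ε) (v t / (1 + lam t))
          else 0) + 6 * ε / ρ := by
      intro t
      set w := v t with hw
      set m := mb t with hmw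
      set l := lam t with hl
      set u := floorTo ε w with hu
      set p := π w with hp
      set b := min (πh u + 2 * ε) (w / (1 + l)) with hbdef
      have hwm := hv t
      have hl0 : 0 ≤ l := (hlam t).1
      have hlρ : l ≤ 1 / ρ := (hlam t).2
      have h1l : (0:ℝ) < 1 + l := by linarith
      have hugrid : IsGridPoint ε u := isGridPoint_floorTo hε0 hwm
      have hum : u ∈ Set.Icc (0:ℝ) 1 := hugrid.1
      have hule : u ≤ w := floorTo_le hε0
      have hugt : w - ε < u := lt_floorTo_add hε0
      have hπhu0 : 0 ≤ πh u := (hπh1 u hugrid).1.1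
      have hbdiv : b ≤ w / (1 + l) := min_le_right _ _
      have hb1l : (1 + l) * b ≤ w := by
        have := mul_le_mul_of_nonneg_left hbdiv h1l.le
        calc (1+l) * b ≤ (1+l) * (w / (1+l)) := this
          _ = w := by field_simp
      have hterm2 : 0 ≤ (if m ≤ b then (w - b) - l * b else 0) := by
        split
        · nlinarith
        · exact le_rfl
      have h6 : 0 ≤ 6 * ε / ρ := by positivity
      by_cases hm1 : m ≤ p
      · rw [if_pos hm1]
        by_cases hpos : (w - p) - l * p ≤ 0
        · linarith
        push_neg at hpos
        -- p < w/(1+l), p ≤ w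
        have hplt : p < w / (1 + l) := by
          rw [lt_div_iff₀ h1l]; nlinarith
        have hpw : p ≤ w := by
          have : w / (1 + l) ≤ w := by
            rw [div_le_iff₀ h1l]; nlinarith [hwm.1]
          linarith
        have hπuw : |π u - p| ≤ |u - w| := hlipR u hum w hwm
        have huwabs : |u - w| ≤ ε := by
          rw [abs_sub_comm, abs_of_nonneg (by linarith)]; linarith
        have hπu_ge : p - ε ≤ π u := by
          have := abs_le.1 (hπuw.trans huwabs)
          linarith [this.1]
        have hmin_ge : p - ε ≤ min (π u) u := le_min hπu_ge (by linarith)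
        have hπhu_gt : min (π u) u - 1/T < πh u := lt_floorTo_add hT1
        have hπhu_ge : p - 2*ε ≤ πh u := by linarith
        have hbp : p ≤ b := le_min (by linarith) hplt.le
        have hmb : m ≤ b := hm1.trans hbp
        rw [if_pos hmb]
        have hble : b ≤ p + 3*ε := by
          have h1 : b ≤ πh u + 2*ε := min_le_left _ _
          have h2 : πh u ≤ min (π u) u := floorTo_le hT1
          have h3 : min (π u) u ≤ π u := min_le_left _ _
          have h4 : π u ≤ p + ε := by
            have := abs_le.1 (hπuw.trans huwabs)
            linarith [this.2]
          linarith
        -- (w - p) - l*p ≤ (w - b) - l*b + 6ε/ρ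
        have hdiff : (1 + l) * (b - p) ≤ (1 + l) * (3 * ε) :=
          mul_le_mul_of_nonneg_left (by linarith) h1l.le
        have hdiff2 : (1 + l) * (3 * ε) ≤ (2 * (1/ρ)) * (3 * ε) :=
          mul_le_mul_of_nonneg_right (by linarith) (by linarith)
        have heq : (2 * (1/ρ)) * (3 * ε) = 6 * ε / ρ := by ring
        linarith
      · rw [if_neg hm1]
        linarith
    -- sum up
    have hV2 : (∑ t ∈ Finset.range T,
          (if mb t ≤ min (πh (floorTo ε (v t)) + 2 * ε) (v t / (1 + lam t)) then
            (v t - min (πh (floorTo ε (v t)) + 2 * ε) (v t / (1 + lam t))) -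
              lam t * min (πh (floorTo ε (v t)) + 2 * ε) (v t / (1 + lam t))
          else 0)) ∈ S2 := ⟨πh, hπh1, hπh2, rfl⟩
    have hle2 := le_csSup hS2bdd hV2
    calc (∑ t ∈ Finset.range T,
          (if mb t ≤ π (v t) then (v t - π (v t)) - lam t * π (v t) else 0))
        ≤ ∑ t ∈ Finset.range T,
          ((if mb t ≤ min (πh (floorTo ε (v t)) + 2 * ε) (v t / (1 + lam t)) then
            (v t - min (πh (floorTo ε (v t)) + 2 * ε) (v t / (1 + lam t))) -
              lam t * min (πh (floorTo ε (v t)) + 2 * ε) (v t / (1 + lam t))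
          else 0) + 6 * ε / ρ) := Finset.sum_le_sum (fun t _ => hterm t)
      _ = (∑ t ∈ Finset.range T,
          (if mb t ≤ min (πh (floorTo ε (v t)) + 2 * ε) (v t / (1 + lam t)) then
            (v t - min (πh (floorTo ε (v t)) + 2 * ε) (v t / (1 + lam t))) -
              lam t * min (πh (floorTo ε (v t)) + 2 * ε) (v t / (1 + lam t))
          else 0)) + T * (6 * ε / ρ) := by
          rw [Finset.sum_add_distrib, Finset.sum_const, Finset.card_range, nsmul_eq_mul]
      _ ≤ sSup S2 + T * (6 * ε / ρ) := by linarith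
      _ = sSup S2 + 6 * ε * T / ρ := by ring
  have hfinal : sSup S1 ≤ sSup S2 + 6 * ε * T / ρ := csSup_le hS1ne hkey
  have h7 : 6 * ε * T / ρ ≤ 7 * ε * T / ρ := by
    have h67 : 6 * ε * (T:ℝ) ≤ 7 * ε * T := by nlinarith
    exact (div_le_div_iff_of_pos_right hρ0).2 h67
  linarith
end
end

section
/- Let v, m ∈ [0,1], λ ∈ [0, 1/ρ], ε ≥ 0, and let β, β' ∈ [0, v/(1+λ)] be two (thresholded) bid values with β ≤ β' ≤ β + 4ε. Then the Lagrangified first-price payoff satisfies 1{β' ≥ m}·( v − (1+λ)β' ) ≥ 1{β ≥ m}·( v − (1+λ)β ) − 4ε(1 + 1/ρ). In particular, in the hierarchical tree of discretized bidding policies, for each level m and node h the jump edge ζ_h is Δ_m-good with Δ_m = 4(1 + 1/ρ)ε_m. -/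
open MeasureTheory

noncomputable section

/-- **Lagrangified payoff comparison of nearby thresholded bids** (core of Lemma "delta good"):
if two thresholded bids `β ≤ β' ≤ β + 4ε` both lie in `[0, v/(1+λ)]`, then the Lagrangified
first-price payoff of `β'` is at least that of `β` minus `4ε(1 + 1/ρ)`.  In particular, in the
hierarchical tree of discretized bidding policies, the jump edge `ζ_h` at each node of level `m`
is `Δ_m`-good with `Δ_m = 4(1 + 1/ρ)ε_m`. -/
theorem thresholded_bid_payoff_comparison
    (ρ v mbid lam ε β β' : ℝ)
    (hρ : ρ ∈ Set.Ioc (0 : ℝ) 1)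
    (hv : v ∈ Set.Icc (0 : ℝ) 1)
    (hm : mbid ∈ Set.Icc (0 : ℝ) 1)
    (hlam : lam ∈ Set.Icc (0 : ℝ) (1 / ρ))
    (hε : 0 ≤ ε)
    (hβ0 : 0 ≤ β) (hββ' : β ≤ β') (hβ'β : β' ≤ β + 4 * ε)
    (hβub : β ≤ v / (1 + lam)) (hβ'ub : β' ≤ v / (1 + lam)) :
    (if mbid ≤ β' then v - (1 + lam) * β' else 0) ≥
      (if mbid ≤ β then v - (1 + lam) * β else 0) - 4 * ε * (1 + 1 / ρ) := by
  obtain ⟨hρ0, hρ1⟩ := hρ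
  obtain ⟨hlam0, hlam1⟩ := hlam
  have h1lam : (0:ℝ) < 1 + lam := by linarith
  have hlamρ : 1 + lam ≤ 1 + 1 / ρ := by linarith
  have hρinv : (0:ℝ) < 1 / ρ := by positivity
  have hεterm : 0 ≤ 4 * ε * (1 + 1 / ρ) := by positivity
  have hwin : v - (1 + lam) * β' ≥ 0 := by
    have := (le_div_iff₀ h1lam).mp hβ'ub
    nlinarith
  by_cases h : mbid ≤ β
  · have h' : mbid ≤ β' := le_trans h hββ'
    rw [if_pos h, if_pos h']
    have : (1 + lam) * β' - (1 + lam) * β ≤ 4 * ε * (1 + 1 / ρ) := by nlinarith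
    linarith
  · rw [if_neg h]
    by_cases h' : mbid ≤ β'
    · rw [if_pos h']; linarith
    · rw [if_neg h']; linarith
end
end
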